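/- arXiv:1609.02526 — 10 statements merged into one kernel-verified Lean document; each statement's English description precedes it below -/
import Mathlib

section
/- For every list ops of Booleans, the open-chain AND-OR network with operator list ops and the open-chain AND-OR network with the entrywise-negated operator list ops.map(¬) have the same number of fixed points, i.e., F(ops) = F(ops.map(¬)). -/
/-- The open-chain AND-OR network map determined by an operator list `ops`
(`true` = AND, `false` = OR), on `ops.length + 2` nodes. -/
def chainMap (ops : List Bool) (x : Fin (ops.length + 2) → Bool) :
    Fin (ops.length + 2) → Bool := fun i =>
  if h0 : (i : ℕ) = 0 then x ⟨1, by omega⟩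
  else if hn : (i : ℕ) = ops.length + 1 then x ⟨ops.length, by omega⟩
  else
    have hi : 1 ≤ (i : ℕ) ∧ (i : ℕ) ≤ ops.length := by
      have := i.isLt; omega
    if ops.get ⟨(i : ℕ) - 1, by omega⟩
    then x ⟨(i : ℕ) - 1, by omega⟩ && x ⟨(i : ℕ) + 1, by omega⟩
    else x ⟨(i : ℕ) - 1, by omega⟩ || x ⟨(i : ℕ) + 1, by omega⟩

/-- `F ops` is the number of fixed points of the open-chain AND-OR network. -/
noncomputable def F (ops : List Bool) : ℕ :=
  Nat.card {x : Fin (ops.length + 2) → Bool // chainMap ops x = x}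

/-- Run-length encoding: block `j` (1-based) consists of `k_j` copies of
`true` if `j` is odd and `false` if `j` is even. -/
def runOps : List ℕ → List Bool
  | [] => []
  | k :: t => List.replicate k true ++ (runOps t).map (fun b => !b)

/-- `Fr L` = 𝔉(L), the number of fixed points of the open-chain AND-OR
network with run-length list `L`. -/
noncomputable def Fr (L : List ℕ) : ℕ := F (runOps L)

theorem Function.Semiconj.natCard_fixedPoints_eq {α β : Type*} {fa : α → α} {fb : β → β}
    (e : α ≃ β) (h : Function.Semiconj e fa fb) :
    Nat.card {x // fa x = x} = Nat.card {y // fb y = y} :=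
  Nat.card_congr <| e.subtypeEquiv fun x => by rw [← h x, e.apply_eq_iff_eq]

def complementState (ops : List Bool) :
    (Fin (ops.length + 2) → Bool) ≃ (Fin ((ops.map (fun b => !b)).length + 2) → Bool) :=
  (finCongr (by simp)).arrowCongr Equiv.boolNot

theorem complementState_apply (ops : List Bool) (x : Fin (ops.length + 2) → Bool)
    (i : Fin ((ops.map (fun b => !b)).length + 2)) :
    complementState ops x i = !x (Fin.cast (by simp) i) :=
  rfl

/-- De Morgan: complementation turns every AND node into an OR node and vice versa. -/
theorem semiconj_complementState_chainMap (ops : List Bool) :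
    Function.Semiconj (complementState ops) (chainMap ops) (chainMap (ops.map (fun b => !b))) := by
  intro x
  funext i
  simp only [complementState_apply, chainMap, Fin.val_cast, List.length_map,
    List.get_eq_getElem, List.getElem_map]
  split_ifs
  · rfl
  · rfl
  · simp_all
  · exact Bool.not_and _ _
  · exact Bool.not_or _ _
  · simp_all

/-- negating every operator does not change the number of
fixed points of an open-chain AND-OR network. -/
theorem andor_open_chain_negation_invariant (ops : List Bool) :
    F ops = F (ops.map (fun b => !b)) :=
  (semiconj_complementState_chainMap ops).natCard_fixedPoints_eq
end

section
/- Let ops be a list of Booleans of length n − 2 (n ≥ 2) and let x be a fixed point of the open-chain AND-OR network with operator list ops. Then x_0 = x_1, x_{n−2} = x_{n−1}, and for every index i with 0 ≤ i ≤ n − 4 such that ops_i = ops_{i+1}, one has x_{i+1} = x_{i+2}. (In particular, consecutive coordinates governed by the same logical operator are equal in any fixed point.) -/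
lemma chain_mid (ops : List Bool) (x : Fin (ops.length + 2) → Bool)
    (hx : chainMap ops x = x) (j : ℕ) (h1 : 1 ≤ j) (h2 : j ≤ ops.length) :
    x ⟨j, by omega⟩ =
      if ops.get ⟨j - 1, by omega⟩
      then x ⟨j - 1, by omega⟩ && x ⟨j + 1, by omega⟩
      else x ⟨j - 1, by omega⟩ || x ⟨j + 1, by omega⟩ := by
  have := congrFun hx ⟨j, by omega⟩
  rw [chainMap] at this
  simp only at this
  rw [dif_neg (by omega), dif_neg (by omega)] at this
  exact this.symm

/-- in a fixed point of an open-chain AND-OR network,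
`x 0 = x 1`, `x (n-2) = x (n-1)`, and consecutive coordinates governed by
the same logical operator are equal. -/
theorem andor_open_chain_fixed_point_structure (ops : List Bool)
    (x : Fin (ops.length + 2) → Bool) (hx : chainMap ops x = x) :
    x ⟨0, by omega⟩ = x ⟨1, by omega⟩ ∧
    x ⟨ops.length, by omega⟩ = x ⟨ops.length + 1, by omega⟩ ∧
    ∀ i : ℕ, (h : i + 1 < ops.length) →
      ops.get ⟨i, by omega⟩ = ops.get ⟨i + 1, h⟩ →
      x ⟨i + 1, by omega⟩ = x ⟨i + 2, by omega⟩ := by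
  have h0 := congrFun hx ⟨0, by omega⟩
  rw [chainMap] at h0
  rw [dif_pos rfl] at h0
  have hn := congrFun hx ⟨ops.length + 1, by omega⟩
  rw [chainMap] at hn
  rw [dif_neg (by simp), dif_pos rfl] at hn
  refine ⟨h0.symm, hn, ?_⟩
  intro i h hops
  have ha := chain_mid ops x hx (i + 1) (by omega) (by omega)
  have hb := chain_mid ops x hx (i + 2) (by omega) (by omega)
  simp only [Nat.add_sub_cancel] at ha hb
  have e1 : (⟨i + 2 - 1, by omega⟩ : Fin ops.length) = ⟨i + 1, h⟩ := by
    apply Fin.ext; simp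
  have e2 : (⟨i + 2 - 1, by omega⟩ : Fin (ops.length + 2)) = ⟨i + 1, by omega⟩ := by
    apply Fin.ext; simp
  rw [e1, e2] at hb
  rw [← hops] at hb
  cases hop : ops.get ⟨i, by omega⟩ <;> rw [hop] at ha hb <;> simp only [if_true, if_false, Bool.false_eq_true] at ha hb
  · rw [hb] at ha ⊢
    cases hxi : x ⟨i, by omega⟩ <;> cases hx1 : x ⟨i + 1, by omega⟩ <;>
      cases hx3 : x ⟨i + 2 + 1, by omega⟩ <;> simp_all
  · rw [hb] at ha ⊢
    cases hxi : x ⟨i, by omega⟩ <;> cases hx1 : x ⟨i + 1, by omega⟩ <;>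
      cases hx3 : x ⟨i + 2 + 1, by omega⟩ <;> simp_all
end

section
/- For every m ≥ 2 and all positive natural numbers k_1,…,k_m, the run-length fixed-point counts satisfy 𝔉([k_1, k_2, …, k_{m−1}, k_m]) = 𝔉([1, min(k_2,2), …, min(k_{m−1},2), 1]), i.e., the first and last run lengths may be replaced by 1 and each interior run length by its minimum with 2 without changing the number of fixed points. -/
def bop (op a c : Bool) : Bool := if op then a && c else a || c

def g : List Bool → Bool → Bool → ℕ
  | [], a, b => if b = a then 1 else 0
  | op :: ops, a, b =>
      (if b = bop op a false then g ops b false else 0) +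
      (if b = bop op a true then g ops b true else 0)

def ok (ops : List Bool) (x : Fin (ops.length + 2) → Bool) : Prop :=
  (∀ j, (hj : j < ops.length) →
      bop (ops[j]'hj) (x ⟨j, by omega⟩) (x ⟨j + 2, by omega⟩) = x ⟨j + 1, by omega⟩) ∧
  x ⟨ops.length, by omega⟩ = x ⟨ops.length + 1, by omega⟩

def shf {n : ℕ} (x : Fin (n + 3) → Bool) : Fin (n + 2) → Bool :=
  fun i => x ⟨(i : ℕ) + 1, by have := i.isLt; omega⟩

lemma shf_at {n : ℕ} (x : Fin (n + 3) → Bool) (m : ℕ) (hm : m < n + 2) :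
    shf x ⟨m, hm⟩ = x ⟨m + 1, by omega⟩ := rfl

def ext2 (a : Bool) {n : ℕ} (z : Fin (n + 2) → Bool) : Fin (n + 3) → Bool :=
  fun i => if h : (i : ℕ) = 0 then a else z ⟨(i : ℕ) - 1, by have := i.isLt; omega⟩

lemma ext2_zero (a : Bool) {n : ℕ} (z : Fin (n + 2) → Bool) (h : 0 < n + 3) :
    ext2 a z ⟨0, h⟩ = a := rfl

lemma ext2_succ (a : Bool) {n : ℕ} (z : Fin (n + 2) → Bool) (m : ℕ) (hm : m + 1 < n + 3) :
    ext2 a z ⟨m + 1, hm⟩ = z ⟨m, by omega⟩ :=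
  dif_neg (Nat.succ_ne_zero m)

def step_equiv (op : Bool) (t : List Bool) (a b : Bool) :
    {x : Fin ((op :: t).length + 2) → Bool //
      x ⟨0, by omega⟩ = a ∧ x ⟨1, by omega⟩ = b ∧ ok (op :: t) x} ≃
    {z : Fin (t.length + 2) → Bool //
      z ⟨0, by omega⟩ = b ∧ bop op a (z ⟨1, by omega⟩) = b ∧ ok t z} := by
  refine
  { toFun := fun x => ⟨shf x.1, ?_, ?_, ?_, ?_⟩
    invFun := fun z => ⟨ext2 a z.1, ?_, ?_, ?_, ?_⟩
    left_inv := ?_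
    right_inv := ?_ }
  · exact x.2.2.1
  · have hg := x.2.2.2.1 0 (Nat.succ_pos t.length)
    rw [shf_at]
    rw [x.2.1] at hg
    exact hg.trans x.2.2.1
  · intro j hj
    have hg := x.2.2.2.1 (j + 1) (Nat.succ_lt_succ hj)
    rw [shf_at, shf_at, shf_at]
    simpa using hg
  · exact x.2.2.2.2
  · exact ext2_zero a z.1 (by omega)
  · exact (ext2_succ a z.1 0 (by omega)).trans z.2.1
  · intro j hj
    match j, hj with
    | 0, hj =>
      rw [ext2_zero, ext2_succ, ext2_succ]
      have := z.2.2.1.trans z.2.1.symm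
      simpa using this
    | (j' + 1), hj =>
      have hj' : j' < t.length := by simpa using hj
      have hg := z.2.2.2.1 j' hj'
      rw [ext2_succ, ext2_succ, ext2_succ]
      simpa using hg
  · show ext2 a z.1 ⟨t.length + 1, by omega⟩ = ext2 a z.1 ⟨t.length + 1 + 1, by omega⟩
    rw [ext2_succ, ext2_succ]
    exact z.2.2.2.2
  · rintro ⟨x, hx⟩
    apply Subtype.ext
    funext i
    obtain ⟨m, hm⟩ := i
    match m, hm with
    | 0, hm => exact (ext2_zero a (shf x) hm).trans hx.1.symm
    | (m' + 1), hm => exact (ext2_succ a (shf x) m' hm).trans rfl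
  · rintro ⟨z, hz⟩
    apply Subtype.ext
    funext i
    obtain ⟨m, hm⟩ := i
    exact ext2_succ a z m (by omega)

lemma card_split {n : ℕ} (P : (Fin n → Bool) → Prop) (i : Fin n) :
    Nat.card {z : Fin n → Bool // P z} =
      Nat.card {z : Fin n → Bool // z i = false ∧ P z} +
      Nat.card {z : Fin n → Bool // z i = true ∧ P z} := by
  classical
  rw [← Nat.card_sum]
  apply Nat.card_congr
  exact
  { toFun := fun z => if h : z.1 i = true then .inr ⟨z.1, h, z.2⟩
      else .inl ⟨z.1, by simpa using h, z.2⟩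
    invFun := fun s => match s with
      | .inl z => ⟨z.1, z.2.2⟩
      | .inr z => ⟨z.1, z.2.2⟩
    left_inv := by rintro ⟨z, hz⟩; by_cases h : z i = true <;> simp [h]
    right_inv := by rintro (⟨z, hz⟩ | ⟨z, hz⟩) <;> simp [hz.1] }

lemma card_ok (ops : List Bool) : ∀ (a b : Bool),
    Nat.card {x : Fin (ops.length + 2) → Bool //
      x ⟨0, by omega⟩ = a ∧ x ⟨1, by omega⟩ = b ∧ ok ops x} = g ops a b := by
  induction ops with
  | nil =>
    intro a b
    by_cases hab : b = a
    · rw [g, if_pos hab, Nat.card_eq_one_iff_unique]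
      constructor
      · constructor
        rintro ⟨x, hx⟩ ⟨y, hy⟩
        apply Subtype.ext; funext i
        obtain ⟨iv, hiv⟩ := i
        simp only [List.length_nil] at hiv
        interval_cases iv
        · exact hx.1.trans hy.1.symm
        · exact hx.2.1.trans hy.2.1.symm
      · exact ⟨⟨fun _ => a, rfl, hab.symm, by intro j hj; simp at hj, rfl⟩⟩
    · rw [g, if_neg hab]
      have : IsEmpty {x : Fin ((List.nil : List Bool).length + 2) → Bool //
          x ⟨0, by omega⟩ = a ∧ x ⟨1, by omega⟩ = b ∧ ok [] x} := by
        constructor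
        rintro ⟨x, h0, h1, _, hend⟩
        exact hab (by rw [← h1, ← h0]; exact hend.symm)
      exact Nat.card_of_isEmpty
  | cons op t ih =>
    intro a b
    rw [Nat.card_congr (step_equiv op t a b)]
    rw [card_split (fun z => z ⟨0, by omega⟩ = b ∧
      bop op a (z ⟨1, by omega⟩) = b ∧ ok t z) ⟨1, by omega⟩]
    have hc : ∀ c : Bool,
        Nat.card {z : Fin (t.length + 2) → Bool //
          z ⟨1, by omega⟩ = c ∧ (z ⟨0, by omega⟩ = b ∧
            bop op a (z ⟨1, by omega⟩) = b ∧ ok t z)} =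
        if b = bop op a c then g t b c else 0 := by
      intro c
      by_cases hbc : b = bop op a c
      · rw [if_pos hbc, ← ih b c]
        apply Nat.card_congr
        apply Equiv.subtypeEquivRight
        intro z
        constructor
        · rintro ⟨h1, h0, _, hok⟩; exact ⟨h0, h1, hok⟩
        · rintro ⟨h0, h1, hok⟩; exact ⟨h1, h0, by rw [h1]; exact hbc.symm, hok⟩
      · rw [if_neg hbc]
        have : IsEmpty {z : Fin (t.length + 2) → Bool //
            z ⟨1, by omega⟩ = c ∧ (z ⟨0, by omega⟩ = b ∧
              bop op a (z ⟨1, by omega⟩) = b ∧ ok t z)} := by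
          constructor
          rintro ⟨z, h1, h0, hb, hok⟩
          exact hbc (by rw [← h1]; exact hb.symm)
        exact Nat.card_of_isEmpty
    rw [hc false, hc true, g]

lemma fix_iff (ops : List Bool) (x : Fin (ops.length + 2) → Bool) :
    chainMap ops x = x ↔ (x ⟨1, by omega⟩ = x ⟨0, by omega⟩ ∧ ok ops x) := by
  rw [funext_iff]
  constructor
  · intro h
    refine ⟨?_, ?_, ?_⟩
    · have := h ⟨0, by omega⟩
      simpa [chainMap] using this
    · intro j hj
      have := h ⟨j + 1, by omega⟩
      rw [chainMap] at this
      rw [dif_neg (by simp), dif_neg (by simp; omega)] at this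
      simpa [bop, List.get_eq_getElem] using this
    · have := h ⟨ops.length + 1, by omega⟩
      rw [chainMap] at this
      rw [dif_neg (by simp), dif_pos (by simp)] at this
      exact this
  · rintro ⟨h01, hgate, hend⟩ i
    rw [chainMap]
    by_cases h0 : (i : ℕ) = 0
    · rw [dif_pos h0]
      have : i = ⟨0, by omega⟩ := Fin.ext h0
      rw [this]; exact h01
    · rw [dif_neg h0]
      by_cases hn : (i : ℕ) = ops.length + 1
      · rw [dif_pos hn]
        have : i = ⟨ops.length + 1, by omega⟩ := Fin.ext hn
        rw [this]; exact hend
      · rw [dif_neg hn]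
        have hi : 1 ≤ (i : ℕ) ∧ (i : ℕ) ≤ ops.length := by have := i.isLt; omega
        have := hgate ((i : ℕ) - 1) (by omega)
        rw [bop] at this
        have e1 : ((i : ℕ) - 1) + 2 = (i : ℕ) + 1 := by omega
        have e2 : ((i : ℕ) - 1) + 1 = (i : ℕ) := by omega
        simp only [e1, e2] at this
        simp only [List.get_eq_getElem]
        exact this

lemma F_eq_G (ops : List Bool) :
    F ops = g ops false false + g ops true true := by
  rw [F]
  rw [Nat.card_congr (Equiv.subtypeEquivRight (fix_iff ops))]
  rw [card_split (fun x => x ⟨1, by omega⟩ = x ⟨0, by omega⟩ ∧ ok ops x) ⟨0, by omega⟩]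
  have hc : ∀ c : Bool,
      Nat.card {x : Fin (ops.length + 2) → Bool //
        x ⟨0, by omega⟩ = c ∧ (x ⟨1, by omega⟩ = x ⟨0, by omega⟩ ∧ ok ops x)} = g ops c c := by
    intro c
    rw [← card_ok ops c c]
    apply Nat.card_congr
    apply Equiv.subtypeEquivRight
    intro x
    constructor
    · rintro ⟨h0, h1, hok⟩; exact ⟨h0, h1.trans h0, hok⟩
    · rintro ⟨h0, h1, hok⟩; exact ⟨h0, h1.trans h0.symm, hok⟩
  rw [hc false, hc true]

lemma g_dd_diag (c : List Bool) (b p : Bool) : g (b :: b :: c) p p = g (b :: c) p p := by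
  cases b <;> cases p <;> simp [g, bop]

lemma g_ddd (c : List Bool) (b p q : Bool) :
    g (b :: b :: b :: c) p q = g (b :: b :: c) p q := by
  cases b <;> cases p <;> cases q <;> simp [g, bop]

lemma g_congr (l₁ l₂ : List Bool) (h : ∀ p q, g l₁ p q = g l₂ p q) :
    ∀ (a : List Bool) (p q : Bool), g (a ++ l₁) p q = g (a ++ l₂) p q := by
  intro a
  induction a with
  | nil => simpa using h
  | cons o t ih => intro p q; simp [g, ih]

lemma g_tail (b : Bool) : ∀ (c : List Bool) (p q : Bool),
    g (c ++ [b, b]) p q = g (c ++ [b]) p q := by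
  intro c
  induction c with
  | nil => intro p q; cases b <;> cases p <;> cases q <;> simp [g, bop]
  | cons o t ih => intro p q; simp [g, ih]

/-- signed run-length encoding -/
def runOpsS (s : Bool) : List ℕ → List Bool
  | [] => []
  | k :: t => List.replicate k s ++ runOpsS (!s) t

def endS : Bool → List ℕ → Bool
  | s, [] => s
  | s, _ :: t => endS (!s) t

lemma runOpsS_not (L : List ℕ) : ∀ s, runOpsS (!s) L = (runOpsS s L).map (fun b => !b) := by
  induction L with
  | nil => intro s; simp [runOpsS]
  | cons k t ih =>
    intro s
    simp only [runOpsS, List.map_append, List.map_replicate]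
    rw [ih (!s)]

lemma runOps_eq (L : List ℕ) : runOps L = runOpsS true L := by
  induction L with
  | nil => rfl
  | cons k t ih =>
    simp only [runOps, runOpsS, ih]
    rw [runOpsS_not t true]

lemma runOpsS_append (P Q : List ℕ) : ∀ s,
    runOpsS s (P ++ Q) = runOpsS s P ++ runOpsS (endS s P) Q := by
  induction P with
  | nil => intro s; simp [runOpsS, endS]
  | cons k t ih => intro s; simp [runOpsS, endS, ih, List.append_assoc]

/-- the fixed-point count, as a function of the ops list -/
def Gg (l : List Bool) : ℕ := g l false false + g l true true

lemma head_red (s : Bool) (T : List ℕ) (j : ℕ) :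
    Gg (runOpsS s ((j + 2) :: T)) = Gg (runOpsS s ((j + 1) :: T)) := by
  have h1 : runOpsS s ((j + 2) :: T)
      = s :: s :: (List.replicate j s ++ runOpsS (!s) T) := by
    simp [runOpsS, List.replicate_succ]
  have h2 : runOpsS s ((j + 1) :: T)
      = s :: (List.replicate j s ++ runOpsS (!s) T) := by
    simp [runOpsS, List.replicate_succ]
  rw [h1, h2, Gg, Gg, g_dd_diag, g_dd_diag]

lemma head_to_one (s : Bool) (T : List ℕ) : ∀ k, 1 ≤ k →
    Gg (runOpsS s (k :: T)) = Gg (runOpsS s (1 :: T)) := by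
  intro k
  induction k with
  | zero => omega
  | succ k ih =>
    intro _
    match k, ih with
    | 0, _ => rfl
    | (j + 1), ih =>
      show Gg (runOpsS s ((j + 2) :: T)) = _
      rw [head_red s T j]
      exact ih (by omega)

lemma tail_red (s : Bool) (T : List ℕ) (j : ℕ) (p q : Bool) :
    g (runOpsS s (T ++ [j + 2])) p q = g (runOpsS s (T ++ [j + 1])) p q := by
  rw [runOpsS_append, runOpsS_append]
  have h1 : runOpsS (endS s T) [j + 2]
      = (List.replicate j (endS s T)) ++ [endS s T, endS s T] := by
    simp [runOpsS]
    rw [show j + 2 = j + 1 + 1 from rfl, List.replicate_succ', List.replicate_succ']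
    simp
  have h2 : runOpsS (endS s T) [j + 1]
      = (List.replicate j (endS s T)) ++ [endS s T] := by
    simp [runOpsS]
    rw [List.replicate_succ']
  rw [h1, h2, ← List.append_assoc, ← List.append_assoc]
  exact g_tail _ _ p q

lemma tail_to_one (s : Bool) (T : List ℕ) : ∀ k, 1 ≤ k → ∀ p q,
    g (runOpsS s (T ++ [k])) p q = g (runOpsS s (T ++ [1])) p q := by
  intro k
  induction k with
  | zero => omega
  | succ k ih =>
    intro _ p q
    match k, ih with
    | 0, _ => rfl
    | (j + 1), ih =>
      show g (runOpsS s (T ++ [j + 2])) p q = _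
      rw [tail_red s T j p q]
      exact ih (by omega) p q

lemma mid_red (s : Bool) (pre post : List ℕ) (j : ℕ) (p q : Bool) :
    g (runOpsS s (pre ++ (j + 3) :: post)) p q
      = g (runOpsS s (pre ++ (j + 2) :: post)) p q := by
  rw [runOpsS_append, runOpsS_append]
  have h1 : runOpsS (endS s pre) ((j + 3) :: post)
      = endS s pre :: endS s pre :: endS s pre ::
        (List.replicate j (endS s pre) ++ runOpsS (!(endS s pre)) post) := by
    simp [runOpsS, List.replicate_succ]
  have h2 : runOpsS (endS s pre) ((j + 2) :: post)
      = endS s pre :: endS s pre ::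
        (List.replicate j (endS s pre) ++ runOpsS (!(endS s pre)) post) := by
    simp [runOpsS, List.replicate_succ]
  rw [h1, h2]
  exact g_congr _ _ (fun p q => g_ddd _ _ p q) (runOpsS s pre) p q

lemma mid_to_two (s : Bool) (pre post : List ℕ) : ∀ j (p q : Bool),
    g (runOpsS s (pre ++ (j + 2) :: post)) p q
      = g (runOpsS s (pre ++ 2 :: post)) p q := by
  intro j
  induction j with
  | zero => intro p q; rfl
  | succ j ih =>
    intro p q
    show g (runOpsS s (pre ++ (j + 3) :: post)) p q = _
    rw [mid_red s pre post j p q]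
    exact ih p q

lemma mid_to_min (s : Bool) (pre post : List ℕ) (k : ℕ) (hk : 1 ≤ k) (p q : Bool) :
    g (runOpsS s (pre ++ k :: post)) p q
      = g (runOpsS s (pre ++ (min k 2) :: post)) p q := by
  match k, hk with
  | 1, _ => rfl
  | (j + 2), _ =>
    have h : min (j + 2) 2 = 2 := by omega
    rw [h]
    exact mid_to_two s pre post j p q

lemma map_red (s : Bool) : ∀ (M pre post : List ℕ), (∀ k ∈ M, 1 ≤ k) → ∀ p q : Bool,
    g (runOpsS s (pre ++ (M ++ post))) p q
      = g (runOpsS s (pre ++ (M.map (fun k => min k 2) ++ post))) p q := by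
  intro M
  induction M with
  | nil => intro pre post _ p q; rfl
  | cons k M ih =>
    intro pre post hM p q
    calc g (runOpsS s (pre ++ ((k :: M) ++ post))) p q
        = g (runOpsS s (pre ++ k :: (M ++ post))) p q := by simp
      _ = g (runOpsS s (pre ++ (min k 2) :: (M ++ post))) p q :=
          mid_to_min s pre _ k (hM k (by simp)) p q
      _ = g (runOpsS s ((pre ++ [min k 2]) ++ (M ++ post))) p q := by simp
      _ = g (runOpsS s ((pre ++ [min k 2]) ++ (M.map (fun k => min k 2) ++ post))) p q :=
          ih (pre ++ [min k 2]) post (fun k h => hM k (by simp [h])) p q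
      _ = g (runOpsS s (pre ++ ((min k 2 :: M.map (fun k => min k 2)) ++ post))) p q := by simp

theorem final_chain (k₁ kₘ : ℕ) (M : List ℕ)
    (hk₁ : 1 ≤ k₁) (hkₘ : 1 ≤ kₘ) (hM : ∀ k ∈ M, 1 ≤ k) :
    Gg (runOpsS true (k₁ :: M ++ [kₘ]))
      = Gg (runOpsS true (1 :: M.map (fun k => min k 2) ++ [1])) := by
  have step1 : Gg (runOpsS true ((k₁ :: M) ++ [kₘ]))
      = Gg (runOpsS true ((k₁ :: M) ++ [1])) := by
    rw [Gg, Gg, tail_to_one true (k₁ :: M) kₘ hkₘ false false,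
        tail_to_one true (k₁ :: M) kₘ hkₘ true true]
  rw [step1]
  have step2 : Gg (runOpsS true (k₁ :: (M ++ [1])))
      = Gg (runOpsS true (1 :: (M ++ [1]))) := head_to_one true (M ++ [1]) k₁ hk₁
  rw [show ((k₁ :: M) ++ [1] : List ℕ) = k₁ :: (M ++ [1]) from rfl, step2]
  show Gg (runOpsS true ([1] ++ (M ++ [1]))) = _
  rw [Gg, Gg, map_red true M [1] [1] hM false false,
      map_red true M [1] [1] hM true true]
  rfl

/-- the first and last run lengths may be replaced by `1` and
each interior run length by its minimum with `2` without changing the number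
of fixed points.  Here the run-length list is `k₁ :: M ++ [kₘ]` (so `m ≥ 2`). -/
theorem andor_open_chain_reduction (k₁ kₘ : ℕ) (M : List ℕ)
    (hk₁ : 1 ≤ k₁) (hkₘ : 1 ≤ kₘ) (hM : ∀ k ∈ M, 1 ≤ k) :
    Fr (k₁ :: M ++ [kₘ]) = Fr (1 :: M.map (fun k => min k 2) ++ [1]) := by
  rw [Fr, Fr, runOps_eq, runOps_eq, F_eq_G, F_eq_G]
  exact final_chain k₁ kₘ M hk₁ hkₘ hM
end

section
/- For all positive natural numbers k_1, k_2, k_3 and every list T of positive natural numbers, 𝔉(k_1 :: k_2 :: k_3 :: T) = 𝔉((k_2 − 1) :: k_3 :: T) + 𝔉((k_3 − 1) :: T). (This is the left-end recursion of the main theorem; note that a first run of length 0 is meaningful in the run-length encoding, its block being empty.) -/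
namespace AO

def app (op a c : Bool) : Bool := if op then a && c else a || c

def E : List Bool → (Bool → Bool → ℕ) → Bool → Bool → ℕ
  | [], g, a, b => g a b
  | op :: rest, g, a, b =>
      (if b = app op a true then E rest g b true else 0) +
      (if b = app op a false then E rest g b false else 0)

def diag : Bool → Bool → ℕ := fun a b => if a = b then 1 else 0

def stepF (v : Bool → Bool → ℕ) (op : Bool) : Bool → Bool → ℕ :=
  fun d e => (if d = app op true e then v true d else 0) +
             (if d = app op false e then v false d else 0)

def fwd (P : List Bool) : Bool → Bool → ℕ := P.foldl stepF diag

lemma E_append (p s : List Bool) (g : Bool → Bool → ℕ) :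
    E (p ++ s) g = E p (E s g) := by
  induction p with
  | nil => rfl
  | cons op rest ih => funext a b; simp [E, ih]

lemma fwd_append (p s : List Bool) : fwd (p ++ s) = s.foldl stepF (fwd p) := by
  simp [fwd, List.foldl_append]

lemma phi (P : List Bool) (g : Bool → Bool → ℕ) :
    E P g true true + E P g false false =
      fwd P false false * g false false + fwd P false true * g false true +
      fwd P true false * g true false + fwd P true true * g true true := by
  induction P using List.reverseRecOn generalizing g with
  | nil => simp [E, fwd, diag]; ring
  | append_singleton P op ih =>
      rw [E_append, ih, fwd_append]
      have h : ∀ c d, E [op] g c d =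
          (if d = app op c true then g d true else 0) +
          (if d = app op c false then g d false else 0) := by
        intro c d; rfl
      simp only [h, List.foldl, stepF]
      cases op <;> simp [app] <;> ring

lemma E_not (ops : List Bool) (g h : Bool → Bool → ℕ)
    (hg : ∀ a b, h a b = g (!a) (!b)) :
    ∀ a b, E (ops.map (fun b => !b)) h a b = E ops g (!a) (!b) := by
  induction ops generalizing g h with
  | nil => intro a b; simpa [E] using hg _ _
  | cons op rest ih =>
      intro a b
      have ihr := ih g h hg
      cases op <;> cases a <;> cases b <;>
        simp [E, app, ihr] <;> ring

/-! vector computations -/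

def vec (p q r s : ℕ) : Bool → Bool → ℕ := fun a b =>
  if a then (if b then s else r) else (if b then q else p)

lemma diag_eq : diag = vec 1 0 0 1 := by
  funext a b; cases a <;> cases b <;> simp [diag, vec]

lemma stepF_and (p q r s : ℕ) :
    stepF (vec p q r s) true = vec (p + r) p 0 s := by
  funext d e; cases d <;> cases e <;> simp [stepF, app, vec] <;> ring

lemma stepF_or (p q r s : ℕ) :
    stepF (vec p q r s) false = vec p 0 s (q + s) := by
  funext d e; cases d <;> cases e <;> simp [stepF, app, vec] <;> ring

lemma foldl_replicate_succ {α β : Type} (f : β → α → β) (v : β) (a : α) (k : ℕ) :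
    List.foldl f v (List.replicate (k + 1) a) = List.foldl f (f v a) (List.replicate k a) := rfl

lemma foldl_replicate_stable {α β : Type} (f : β → α → β) (v : β) (a : α)
    (h : f v a = v) : ∀ k, List.foldl f v (List.replicate k a) = v := by
  intro k; induction k with
  | zero => rfl
  | succ k ih => rw [foldl_replicate_succ, h, ih]

/-- AND block applied once -/
lemma and_pow_one (p q r s : ℕ) :
    List.foldl stepF (vec p q r s) (List.replicate 1 true) = vec (p + r) p 0 s := by
  rw [foldl_replicate_succ, stepF_and]; rfl

lemma and_pow_many (p q r s k : ℕ) (hk : 2 ≤ k) :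
    List.foldl stepF (vec p q r s) (List.replicate k true) = vec (p + r) (p + r) 0 s := by
  obtain ⟨j, rfl⟩ : ∃ j, k = j + 2 := ⟨k - 2, by omega⟩
  rw [foldl_replicate_succ, stepF_and, foldl_replicate_succ, stepF_and]
  rw [foldl_replicate_stable]
  · simp
  · rw [stepF_and]; simp

lemma or_pow_one (p q r s : ℕ) :
    List.foldl stepF (vec p q r s) (List.replicate 1 false) = vec p 0 s (q + s) := by
  rw [foldl_replicate_succ, stepF_or]; rfl

lemma or_pow_many (p q r s k : ℕ) (hk : 2 ≤ k) :
    List.foldl stepF (vec p q r s) (List.replicate k false) = vec p 0 (q + s) (q + s) := by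
  obtain ⟨j, rfl⟩ : ∃ j, k = j + 2 := ⟨k - 2, by omega⟩
  rw [foldl_replicate_succ, stepF_or, foldl_replicate_succ, stepF_or]
  rw [foldl_replicate_stable]
  · simp
  · rw [stepF_or]; simp

lemma fwd_true_pow (k : ℕ) (hk : 1 ≤ k) :
    fwd (List.replicate k true) = vec 1 1 0 1 := by
  unfold fwd
  rw [diag_eq]
  rcases Nat.lt_or_ge k 2 with h | h
  · have : k = 1 := by omega
    subst this
    simpa using and_pow_one 1 0 0 1
  · simpa using and_pow_many 1 0 0 1 k h

lemma fwd_false_pow (k : ℕ) (hk : 1 ≤ k) :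
    fwd (List.replicate k false) = vec 1 0 1 1 := by
  unfold fwd
  rw [diag_eq]
  rcases Nat.lt_or_ge k 2 with h | h
  · have : k = 1 := by omega
    subst this
    simpa using or_pow_one 1 0 0 1
  · simpa using or_pow_many 1 0 0 1 k h

lemma main_fwd (k1 k2 k3 : ℕ) (h1 : 1 ≤ k1) (h2 : 1 ≤ k2) (h3 : 1 ≤ k3) :
    ∀ a b, fwd (List.replicate k1 true ++ List.replicate k2 false ++ List.replicate k3 true) a b
      = fwd (List.replicate (k2 - 1) false ++ List.replicate k3 true) a b
        + fwd (List.replicate (k3 - 1) true) a b := by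
  have hA0 : fwd (List.replicate k1 true ++ List.replicate k2 false ++ List.replicate k3 true)
      = List.foldl stepF (List.foldl stepF (vec 1 1 0 1) (List.replicate k2 false))
          (List.replicate k3 true) := by
    rw [fwd_append, fwd_append, fwd_true_pow k1 h1]
  have hB0 : fwd (List.replicate (k2 - 1) false ++ List.replicate k3 true)
      = List.foldl stepF (fwd (List.replicate (k2 - 1) false)) (List.replicate k3 true) := by
    rw [fwd_append]
  -- the inner OR-block results
  have hBin : fwd (List.replicate (k2 - 1) false) = if k2 = 1 then vec 1 0 0 1 else vec 1 0 1 1 := by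
    rcases Nat.lt_or_ge k2 2 with h | h
    · have : k2 = 1 := by omega
      subst this
      simp [fwd, diag_eq]
    · rw [if_neg (by omega), fwd_false_pow _ (by omega)]
  have hAin : List.foldl stepF (vec 1 1 0 1) (List.replicate k2 false)
      = if k2 = 1 then vec 1 0 1 2 else vec 1 0 2 2 := by
    rcases Nat.lt_or_ge k2 2 with h | h
    · have : k2 = 1 := by omega
      subst this
      rw [if_pos rfl]
      simpa using or_pow_one 1 1 0 1
    · rw [if_neg (by omega)]
      simpa using or_pow_many 1 1 0 1 k2 h
  have hC : fwd (List.replicate (k3 - 1) true) = if k3 = 1 then vec 1 0 0 1 else vec 1 1 0 1 := by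
    rcases Nat.lt_or_ge k3 2 with h | h
    · have : k3 = 1 := by omega
      subst this
      simp [fwd, diag_eq]
    · rw [if_neg (by omega), fwd_true_pow _ (by omega)]
  intro a b
  rw [hA0, hB0, hAin, hBin, hC]
  rcases Nat.lt_or_ge k2 2 with h2' | h2' <;> rcases Nat.lt_or_ge k3 2 with h3' | h3'
  · have e2 : k2 = 1 := by omega
    have e3 : k3 = 1 := by omega
    subst e2; subst e3
    rw [if_pos rfl, if_pos rfl, if_pos rfl, and_pow_one 1 0 1 2, and_pow_one 1 0 0 1]
    cases a <;> cases b <;> simp [vec]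
  · have e2 : k2 = 1 := by omega
    subst e2
    rw [if_pos rfl, if_pos rfl, if_neg (show ¬ k3 = 1 by omega),
        and_pow_many 1 0 1 2 k3 h3', and_pow_many 1 0 0 1 k3 h3']
    cases a <;> cases b <;> simp [vec]
  · have e3 : k3 = 1 := by omega
    subst e3
    rw [if_neg (show ¬ k2 = 1 by omega), if_neg (show ¬ k2 = 1 by omega), if_pos rfl,
        and_pow_one 1 0 2 2, and_pow_one 1 0 1 1]
    cases a <;> cases b <;> simp [vec]
  · rw [if_neg (show ¬ k2 = 1 by omega), if_neg (show ¬ k2 = 1 by omega),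
        if_neg (show ¬ k3 = 1 by omega),
        and_pow_many 1 0 2 2 k3 h3', and_pow_many 1 0 1 1 k3 h3']
    cases a <;> cases b <;> simp [vec]

/-- `Fc` is the transfer-matrix count of fixed points. -/
def Fc (ops : List Bool) : ℕ := E ops diag true true + E ops diag false false

lemma Fc_add (A B C : List Bool)
    (h : ∀ a b, fwd A a b = fwd B a b + fwd C a b) (s : List Bool) :
    Fc (A ++ s) = Fc (B ++ s) + Fc (C ++ s) := by
  unfold Fc
  rw [E_append, E_append, E_append, phi, phi, phi, h, h, h, h]
  ring

lemma Fc_not (ops : List Bool) : Fc (ops.map (fun b => !b)) = Fc ops := by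
  unfold Fc
  rw [E_not ops diag diag (by intro a b; cases a <;> cases b <;> simp [diag]),
      E_not ops diag diag (by intro a b; cases a <;> cases b <;> simp [diag])]
  simp [Bool.not_true, Bool.not_false]
  ring


/-! ### Counting fixed points: the local-constraint predicate `Ok` -/

def Ok : (ops : List Bool) → (Fin (ops.length + 2) → Bool) → Prop
  | [], x => x ⟨1, by omega⟩ = x ⟨0, by omega⟩
  | op :: rest, x =>
      x ⟨1, by omega⟩ =
        app op (x ⟨0, by omega⟩) (x ⟨2, by simp only [List.length_cons]; omega⟩) ∧
      Ok rest (fun i => x ⟨i.1 + 1, by have := i.isLt; simp only [List.length_cons] at *; omega⟩)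

lemma chainMap_zero (ops : List Bool) (x : Fin (ops.length + 2) → Bool) :
    chainMap ops x ⟨0, by omega⟩ = x ⟨1, by omega⟩ := by
  simp [chainMap]

lemma chainMap_one (op : Bool) (rest : List Bool) (x : Fin (rest.length + 3) → Bool) :
    chainMap (op :: rest) x ⟨1, by simp only [List.length_cons]; omega⟩
      = app op (x ⟨0, by omega⟩) (x ⟨2, by omega⟩) := by
  simp only [chainMap]
  rw [dif_neg (by omega), dif_neg (by simp only [List.length_cons]; omega)]
  rfl

lemma chainMap_cons_succ (op : Bool) (rest : List Bool)
    (x : Fin (rest.length + 3) → Bool) (j : Fin (rest.length + 2)) (hj : (j : ℕ) ≠ 0) :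
    chainMap (op :: rest) x
        ⟨(j : ℕ) + 1, by simp only [List.length_cons]; have := j.isLt; omega⟩
      = chainMap rest (fun i => x ⟨(i : ℕ) + 1, by have := i.isLt; omega⟩) j := by
  obtain ⟨k, hk⟩ := j
  simp only at hj ⊢
  obtain ⟨k', rfl⟩ : ∃ k', k = k' + 1 := ⟨k - 1, by omega⟩
  by_cases hlast : k' + 1 = rest.length + 1
  · simp only [chainMap]
    rw [dif_neg (by omega), dif_pos (by simp only [List.length_cons]; omega),
        dif_neg (by omega), dif_pos hlast]
    rfl
  · have hk2 : k' + 1 ≤ rest.length := by omega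
    simp only [chainMap]
    rw [dif_neg (by omega), dif_neg (by simp only [List.length_cons]; omega),
        dif_neg (by omega), dif_neg hlast]
    rfl

lemma aux_iff : ∀ (ops : List Bool) (x : Fin (ops.length + 2) → Bool),
    (∀ i : Fin (ops.length + 2), (i : ℕ) ≠ 0 → chainMap ops x i = x i) ↔ Ok ops x := by
  intro ops
  induction ops with
  | nil =>
      intro x
      constructor
      · intro h
        have h1 := h ⟨1, by omega⟩ (by simp)
        simp only [chainMap] at h1
        rw [dif_neg (by simp), dif_pos (by simp)] at h1
        exact h1.symm
      · intro h i hi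
        rcases i with ⟨iv, hlt⟩
        have hiv : iv ≠ 0 := hi
        have hlt' : iv < 2 := by simpa using hlt
        have : iv = 1 := by omega
        subst this
        simp only [chainMap]
        rw [dif_neg (by simp), dif_pos (by simp)]
        exact h.symm
  | cons op rest ih =>
      intro x
      constructor
      · intro h
        refine ⟨?_, ?_⟩
        · have h1 := h ⟨1, by simp only [List.length_cons]; omega⟩ (by simp)
          rw [chainMap_one] at h1
          exact h1.symm
        · refine (ih _).mp ?_
          intro j hj
          have hx := h ⟨(j : ℕ) + 1,
            by simp only [List.length_cons]; have := j.isLt; omega⟩ (Nat.succ_ne_zero _)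
          rw [chainMap_cons_succ op rest x j hj] at hx
          exact hx
      · rintro ⟨h1, h2⟩ i hi
        rcases i with ⟨iv, hlt⟩
        have hiv : iv ≠ 0 := hi
        have hlt' : iv < rest.length + 3 := by simpa using hlt
        by_cases hone : iv = 1
        · subst hone
          rw [chainMap_one]
          exact h1.symm
        · obtain ⟨jv, rfl⟩ : ∃ jv, iv = jv + 1 := ⟨iv - 1, by omega⟩
          have hjlt : jv < rest.length + 2 := by omega
          have hcs := chainMap_cons_succ op rest x ⟨jv, hjlt⟩ (show jv ≠ 0 by omega)
          have hx := (ih _).mpr h2 ⟨jv, hjlt⟩ (show jv ≠ 0 by omega)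
          exact hcs.trans hx

lemma fixed_iff (ops : List Bool) (x : Fin (ops.length + 2) → Bool) :
    chainMap ops x = x ↔ (x ⟨1, by omega⟩ = x ⟨0, by omega⟩ ∧ Ok ops x) := by
  rw [funext_iff, ← aux_iff]
  constructor
  · intro h
    refine ⟨?_, fun i hi => h i⟩
    have h0 := h ⟨0, by omega⟩
    rw [chainMap_zero] at h0
    exact h0
  · rintro ⟨h0, h⟩ i
    by_cases hi : (i : ℕ) = 0
    · rcases i with ⟨iv, hlt⟩
      have : iv = 0 := hi
      subst this
      rw [chainMap_zero]
      exact h0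
    · exact h i hi

lemma card_partition {α : Type} [Finite α] (P : α → Prop) (f : α → Bool) :
    Nat.card {x : α // P x} =
      Nat.card {x : α // P x ∧ f x = true} + Nat.card {x : α // P x ∧ f x = false} := by
  classical
  rw [← Nat.card_sum]
  apply Nat.card_congr
  refine
    { toFun := fun x => if h : f x.1 = true then Sum.inl ⟨x.1, x.2, h⟩
        else Sum.inr ⟨x.1, x.2, by simpa using h⟩
      invFun := fun s => Sum.elim (fun y => ⟨y.1, y.2.1⟩) (fun y => ⟨y.1, y.2.1⟩) s
      left_inv := ?_
      right_inv := ?_ }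
  · intro x
    by_cases h : f x.1 = true <;> simp [h]
  · rintro (⟨y, hy, hf⟩ | ⟨y, hy, hf⟩) <;> simp [hf]

lemma cnt_correct (ops : List Bool) :
    ∀ a b : Bool, Nat.card {x : Fin (ops.length + 2) → Bool //
        x ⟨0, by omega⟩ = a ∧ x ⟨1, by omega⟩ = b ∧ Ok ops x} = E ops diag a b := by
  induction ops with
  | nil =>
      intro a b
      show Nat.card {x : Fin 2 → Bool //
        x ⟨0, by omega⟩ = a ∧ x ⟨1, by omega⟩ = b ∧
          x ⟨1, by omega⟩ = x ⟨0, by omega⟩} = diag a b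
      by_cases hab : a = b
      · subst hab
        rw [diag, if_pos rfl, Nat.card_eq_one_iff_unique]
        constructor
        · constructor
          rintro ⟨x, hx0, hx1, hx10⟩ ⟨y, hy0, hy1, hy10⟩
          apply Subtype.ext
          funext i
          rcases i with ⟨iv, hiv⟩
          interval_cases iv
          · exact hx0.trans hy0.symm
          · exact hx1.trans hy1.symm
        · exact ⟨⟨fun _ => a, rfl, rfl, rfl⟩⟩
      · rw [diag, if_neg hab, Nat.card_eq_zero]
        left
        refine ⟨?_⟩
        rintro ⟨x, hx0, hx1, hx10⟩
        exact hab (by rw [← hx0, ← hx1, hx10])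
  | cons op rest ih =>
      intro a b
      rw [card_partition _ (fun x => x ⟨2, by simp only [List.length_cons]; omega⟩)]
      have key : ∀ c : Bool,
          Nat.card {x : Fin ((op :: rest).length + 2) → Bool //
            (x ⟨0, by omega⟩ = a ∧ x ⟨1, by omega⟩ = b ∧ Ok (op :: rest) x) ∧
              x ⟨2, by simp only [List.length_cons]; omega⟩ = c}
          = if b = app op a c then E rest diag b c else 0 := by
        intro c
        by_cases hbc : b = app op a c
        · rw [if_pos hbc, ← ih b c]
          apply Nat.card_congr
          exact
            { toFun := fun x => ⟨fun i => x.1 ⟨(i : ℕ) + 1,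
                by have := i.isLt; simp only [List.length_cons]; omega⟩,
                x.2.1.2.1, x.2.2, x.2.1.2.2.2⟩
              invFun := fun y => ⟨fun i => if h : (i : ℕ) = 0 then a
                  else y.1 ⟨(i : ℕ) - 1,
                    by have := i.isLt; simp only [List.length_cons] at this; omega⟩,
                ⟨rfl, y.2.1,
                  by show y.1 ⟨0, by omega⟩ = app op a (y.1 ⟨1, by omega⟩)
                     rw [y.2.1, y.2.2.1]
                     exact hbc,
                  by have hfun : (fun i : Fin (rest.length + 2) =>
                        if h : (i : ℕ) + 1 = 0 then a
                        else y.1 ⟨(i : ℕ) + 1 - 1, by have := i.isLt; omega⟩) = y.1 := by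
                        funext i
                        rw [dif_neg (by omega)]
                        exact rfl
                     exact hfun ▸ y.2.2.2⟩, y.2.2.1⟩
              left_inv := by
                rintro ⟨x, ⟨hx0, hx1, hOk⟩, hx2⟩
                apply Subtype.ext
                funext i
                show (if h : (i : ℕ) = 0 then a else _) = x i
                by_cases h : (i : ℕ) = 0
                · rw [dif_pos h, ← hx0]
                  exact (congrArg x (Fin.ext h)).symm
                · rw [dif_neg h]
                  exact congrArg x (Fin.ext (by simp; omega))
              right_inv := fun y => Subtype.ext rfl }
        · rw [if_neg hbc, Nat.card_eq_zero]
          left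
          refine ⟨?_⟩
          rintro ⟨x, ⟨hx0, hx1, hOk⟩, hx2⟩
          exact hbc (by rw [← hx1, ← hx0, ← hx2]; exact hOk.1)
      rw [key true, key false]
      rfl

lemma F_eq (ops : List Bool) : F ops = Fc ops := by
  rw [F, Fc]
  rw [Nat.card_congr (Equiv.subtypeEquivRight (fixed_iff ops))]
  rw [card_partition _ (fun x => x ⟨0, by omega⟩)]
  rw [← cnt_correct ops true true, ← cnt_correct ops false false]
  congr 1
  · apply Nat.card_congr (Equiv.subtypeEquivRight ?_)
    intro x
    exact ⟨fun ⟨⟨h1, h2⟩, h0⟩ => ⟨h0, h1.trans h0, h2⟩,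
      fun ⟨h0, h1, h2⟩ => ⟨⟨h1.trans h0.symm, h2⟩, h0⟩⟩
  · apply Nat.card_congr (Equiv.subtypeEquivRight ?_)
    intro x
    exact ⟨fun ⟨⟨h1, h2⟩, h0⟩ => ⟨h0, h1.trans h0, h2⟩,
      fun ⟨h0, h1, h2⟩ => ⟨⟨h1.trans h0.symm, h2⟩, h0⟩⟩

lemma runOps_cons_cons (k k' : ℕ) (t : List ℕ) :
    runOps (k :: k' :: t) =
      List.replicate k true ++ (List.replicate k' false ++ runOps t) := by
  simp only [runOps, List.map_append, List.map_replicate, Bool.not_true, List.map_map]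
  simp [Function.comp_def]


end AO

open AO in
/-- left-end recursion of the main theorem:
`𝔉(k₁,k₂,k₃,…) = 𝔉(k₂-1,k₃,…) + 𝔉(k₃-1,…)`. -/
theorem andor_open_chain_left_recursion (k₁ k₂ k₃ : ℕ) (T : List ℕ)
    (hk₁ : 1 ≤ k₁) (hk₂ : 1 ≤ k₂) (hk₃ : 1 ≤ k₃) (hT : ∀ k ∈ T, 1 ≤ k) :
    Fr (k₁ :: k₂ :: k₃ :: T) = Fr ((k₂ - 1) :: k₃ :: T) + Fr ((k₃ - 1) :: T) := by
  unfold Fr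
  rw [runOps_cons_cons k₁ k₂ (k₃ :: T), runOps_cons_cons (k₂ - 1) k₃ T,
      show runOps (k₃ :: T) = List.replicate k₃ true ++ (runOps T).map (fun b => !b) from rfl,
      show runOps ((k₃ - 1) :: T)
        = List.replicate (k₃ - 1) true ++ (runOps T).map (fun b => !b) from rfl]
  rw [F_eq, F_eq, F_eq]
  rw [← Fc_not (List.replicate (k₂ - 1) true ++ (List.replicate k₃ false ++ runOps T))]
  simp only [List.map_append, List.map_replicate, Bool.not_true, Bool.not_false]
  rw [show List.replicate k₁ true ++ (List.replicate k₂ false ++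
        (List.replicate k₃ true ++ (runOps T).map (fun b => !b)))
      = (List.replicate k₁ true ++ List.replicate k₂ false ++ List.replicate k₃ true)
        ++ (runOps T).map (fun b => !b) from by simp [List.append_assoc],
      show List.replicate (k₂ - 1) false ++ (List.replicate k₃ true ++ (runOps T).map (fun b => !b))
      = (List.replicate (k₂ - 1) false ++ List.replicate k₃ true) ++ (runOps T).map (fun b => !b)
        from (List.append_assoc _ _ _).symm]
  exact Fc_add _ _ _ (main_fwd k₁ k₂ k₃ hk₁ hk₂ hk₃) _
end

section
/- For all positive natural numbers k_{m−2}, k_{m−1}, k_m and every list T of positive natural numbers, 𝔉(T ++ [k_{m−2}, k_{m−1}, k_m]) = 𝔉(T ++ [k_{m−2}, k_{m−1} − 1]) + 𝔉(T ++ [k_{m−2} − 1]). (This is the right-end recursion of the main theorem; note that a last run of length 0 is meaningful in the run-length encoding, its block being empty.) -/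
def app (op a c : Bool) : Bool := if op then a && c else a || c

def h : List Bool → Bool → Bool → ℕ
  | [], a, b => if a = b then 1 else 0
  | op :: ops, a, b =>
      (if b = app op a false then h ops b false else 0) +
      (if b = app op a true then h ops b true else 0)

def sat (ops : List Bool) (x : Fin (ops.length + 2) → Bool) : Prop :=
  x ⟨ops.length + 1, by omega⟩ = x ⟨ops.length, by omega⟩ ∧
  ∀ j : Fin ops.length,
    x ⟨(j : ℕ) + 1, by have := j.isLt; omega⟩ =
      app (ops.get j) (x ⟨(j : ℕ), by have := j.isLt; omega⟩)
        (x ⟨(j : ℕ) + 2, by have := j.isLt; omega⟩)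

instance (ops : List Bool) : DecidablePred (sat ops) := by
  intro x; unfold sat; infer_instance

lemma fixed_iff (ops : List Bool) (x : Fin (ops.length + 2) → Bool) :
    chainMap ops x = x ↔ (x ⟨0, by omega⟩ = x ⟨1, by omega⟩ ∧ sat ops x) := by
  have xc : ∀ (m m' : ℕ) (p : m < ops.length + 2) (p' : m' < ops.length + 2),
      m = m' → x ⟨m, p⟩ = x ⟨m', p'⟩ := by
    intro m m' p p' e; subst e; rfl
  constructor
  · intro hfix
    have h' : ∀ i, chainMap ops x i = x i := fun i => congrFun hfix i
    refine ⟨?_, ?_, ?_⟩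
    · have := h' ⟨0, by omega⟩
      simp only [chainMap, dif_pos] at this
      exact this.symm
    · have := h' ⟨ops.length + 1, by omega⟩
      simp only [chainMap] at this
      rw [dif_neg (show ¬ ((⟨ops.length + 1, by omega⟩ : Fin (ops.length+2)) : ℕ) = 0 from Nat.succ_ne_zero _)] at this
      simp only [dif_pos] at this
      exact this.symm
    · intro j
      have := h' ⟨(j : ℕ) + 1, by have := j.isLt; omega⟩
      simp only [chainMap] at this
      rw [dif_neg (by omega : ¬ ((j:ℕ)+1) = 0),
          dif_neg (by have := j.isLt; omega : ¬ ((j:ℕ)+1) = ops.length + 1)] at this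
      rw [← this]
      have e1 : ops.get ⟨(j:ℕ)+1-1, by have := j.isLt; omega⟩ = ops.get j :=
        congrArg ops.get (Fin.ext (show (j:ℕ)+1-1 = (j:ℕ) by omega))
      rw [e1, xc ((j:ℕ)+1-1) (j:ℕ) _ (by have := j.isLt; omega) (by omega),
          xc ((j:ℕ)+1+1) ((j:ℕ)+2) _ (by have := j.isLt; omega) (by omega)]
      unfold app
      split <;> rfl
  · rintro ⟨h01, hend, hint⟩
    funext i
    simp only [chainMap]
    split <;> rename_i h0
    · rw [show x i = x ⟨(i:ℕ), i.isLt⟩ from rfl, xc (i:ℕ) 0 _ (by omega) h0]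
      exact h01.symm
    · split <;> rename_i hn
      · rw [show x i = x ⟨(i:ℕ), i.isLt⟩ from rfl, xc (i:ℕ) (ops.length+1) _ (by omega) hn]
        exact hend.symm
      · have hi : 1 ≤ (i : ℕ) ∧ (i : ℕ) ≤ ops.length := by have := i.isLt; omega
        have hj := hint ⟨(i : ℕ) - 1, by omega⟩
        simp only at hj
        have e2 : x ⟨(i:ℕ)-1+1, by omega⟩ = x ⟨(i:ℕ), i.isLt⟩ := xc _ _ _ _ (by omega)
        have e3 : x ⟨(i:ℕ)-1+2, by omega⟩ = x ⟨(i:ℕ)+1, by omega⟩ := xc _ _ _ _ (by omega)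
        rw [e2, e3] at hj
        rw [show x i = x ⟨(i:ℕ), i.isLt⟩ from rfl, hj]
        unfold app
        split <;> rfl

lemma sat_cons (op : Bool) (ops : List Bool) (x : Fin (ops.length + 1 + 2) → Bool) :
    sat (op :: ops) x ↔
      (x ⟨1, by omega⟩ = app op (x ⟨0, by omega⟩) (x ⟨2, by omega⟩)) ∧
      sat ops (fun j => x ⟨(j : ℕ) + 1, by have := j.isLt; omega⟩) := by
  have hl : (op :: ops).length = ops.length + 1 := rfl
  have xc : ∀ (m m' : ℕ) (p : m < ops.length + 1 + 2) (p' : m' < ops.length + 1 + 2),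
      m = m' → x ⟨m, p⟩ = x ⟨m', p'⟩ := by
    intro m m' p p' e; subst e; rfl
  have egS : ∀ (m : ℕ) (p : m + 1 < (op :: ops).length) (q : m < ops.length),
      (op :: ops).get ⟨m + 1, p⟩ = ops.get ⟨m, q⟩ := fun _ _ _ => rfl
  constructor
  · rintro ⟨hend, hint⟩
    refine ⟨?_, ?_, ?_⟩
    · exact hint ⟨0, by omega⟩
    · exact hend
    · intro j
      have := hint ⟨(j : ℕ) + 1, by have := j.isLt; omega⟩
      simp only at this ⊢
      rw [this, egS (j : ℕ) _ (by have := j.isLt; omega),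
        xc ((j:ℕ)+1+2) ((j:ℕ)+2+1) (by have := j.isLt; omega) (by have := j.isLt; omega)
          (by omega)]
  · rintro ⟨h1, hend', hint'⟩
    refine ⟨hend', ?_⟩
    rintro ⟨jv, hj⟩
    match jv, hj with
    | 0, hj => exact h1
    | (n+1), hj =>
      have hn : n < ops.length := by omega
      have := hint' ⟨n, hn⟩
      simp only at this ⊢
      rw [this, egS n _ hn,
        xc (n+2+1) (n+1+2) (by omega) (by omega) (by omega)]

lemma card_guard {α : Type*} (K : Prop) [Decidable K] (Q : α → Prop) [Finite α]:
    Nat.card {y : α // K ∧ Q y} = if K then Nat.card {y : α // Q y} else 0 := by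
  split <;> rename_i hK
  · exact Nat.card_congr (Equiv.subtypeEquivRight (fun y => by simp [hK]))
  · have : IsEmpty {y : α // K ∧ Q y} := ⟨fun z => hK z.2.1⟩
    exact Nat.card_of_isEmpty

lemma card_split_s5 {α : Type*} [Finite α] (p : α → Prop) (f : α → Bool) :
    Nat.card {x // p x} =
      Nat.card {x // p x ∧ f x = false} + Nat.card {x // p x ∧ f x = true} := by
  classical
  rw [← Nat.card_sum]
  apply Nat.card_congr
  refine ⟨fun x => if h : f x.1 = true then Sum.inr ⟨x.1, x.2, h⟩
            else Sum.inl ⟨x.1, x.2, by simpa using h⟩,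
          Sum.elim (fun z => ⟨z.1, z.2.1⟩) (fun z => ⟨z.1, z.2.1⟩), ?_, ?_⟩
  · intro x; by_cases h : f x.1 = true <;> simp [h]
  · rintro (⟨z, hz, hf⟩ | ⟨z, hz, hf⟩) <;> simp [hf]

lemma card_sat (ops : List Bool) : ∀ (a b : Bool),
    Nat.card {x : Fin (ops.length + 2) → Bool //
      x ⟨0, by omega⟩ = a ∧ x ⟨1, by omega⟩ = b ∧ sat ops x} = h ops a b := by
  induction ops with
  | nil =>
      intro a b
      rw [Nat.card_eq_fintype_card]
      cases a <;> cases b <;> decide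
  | cons op ops ih =>
      intro a b
      show Nat.card {x : Fin (ops.length + 1 + 2) → Bool //
        x ⟨0, by omega⟩ = a ∧ x ⟨1, by omega⟩ = b ∧ sat (op :: ops) x} = h (op :: ops) a b
      have e : {x : Fin (ops.length + 1 + 2) → Bool //
            x ⟨0, by omega⟩ = a ∧ x ⟨1, by omega⟩ = b ∧ sat (op :: ops) x} ≃
          {y : Fin (ops.length + 2) → Bool //
            y ⟨0, by omega⟩ = b ∧ (b = app op a (y ⟨1, by omega⟩) ∧ sat ops y)} := by
        refine ⟨fun x => ⟨fun j => x.1 ⟨(j : ℕ) + 1, by have := j.isLt; omega⟩, ?_⟩,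
                fun y => ⟨fun i => if h : (i : ℕ) = 0 then a
                  else y.1 ⟨(i : ℕ) - 1, by have := i.isLt; omega⟩, ?_⟩, ?_, ?_⟩
        · obtain ⟨x, hx0, hx1, hsat⟩ := x
          rw [sat_cons] at hsat
          refine ⟨hx1, ?_, hsat.2⟩
          show b = app op a (x ⟨2, by omega⟩)
          rw [← hx0, ← hx1]
          exact hsat.1
        · obtain ⟨y, hy0, hyapp, hsat⟩ := y
          refine ⟨?_, ?_, ?_⟩
          · show (if h : (0 : ℕ) = 0 then a else y ⟨0 - 1, by omega⟩) = a
            rw [dif_pos rfl]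
          · show (if h : (1 : ℕ) = 0 then a else y ⟨1 - 1, by omega⟩) = b
            rw [dif_neg (by omega : ¬ (1 : ℕ) = 0)]
            exact hy0
          · rw [sat_cons]
            constructor
            · show (if h : (1 : ℕ) = 0 then a else y ⟨1 - 1, by omega⟩) =
                app op (if h : (0 : ℕ) = 0 then a else y ⟨0 - 1, by omega⟩)
                  (if h : (2 : ℕ) = 0 then a else y ⟨2 - 1, by omega⟩)
              rw [dif_pos rfl, dif_neg (by omega : ¬ (1 : ℕ) = 0),
                dif_neg (by omega : ¬ (2 : ℕ) = 0)]
              rw [show y ⟨1 - 1, by omega⟩ = y ⟨0, by omega⟩ from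
                congrArg y (Fin.ext (show (1 : ℕ) - 1 = 0 by omega)), hy0]
              exact hyapp
            · have hfe : (fun (j : Fin (ops.length + 2)) =>
                  (fun i : Fin (ops.length + 1 + 2) => if h : (i : ℕ) = 0 then a
                    else y ⟨(i : ℕ) - 1, by have := i.isLt; omega⟩)
                    ⟨(j : ℕ) + 1, by have := j.isLt; omega⟩) = y := by
                funext j
                simp only
                rw [dif_neg (by omega : ¬ ((j : ℕ) + 1) = 0)]
                exact congrArg y (Fin.ext (show (j : ℕ) + 1 - 1 = (j : ℕ) by omega))
              rw [hfe]
              exact hsat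
        · intro x
          apply Subtype.ext
          funext i
          simp only
          split <;> rename_i h0
          · exact (x.2.1).symm.trans
              (congrArg x.1 (Fin.ext (show (0 : ℕ) = (i : ℕ) by omega)))
          · exact congrArg x.1 (Fin.ext (show (i : ℕ) - 1 + 1 = (i : ℕ) by omega))
        · intro y
          apply Subtype.ext
          funext j
          simp only
          rw [dif_neg (by omega : ¬ ((j : ℕ) + 1) = 0)]
          exact congrArg y.1 (Fin.ext (show (j : ℕ) + 1 - 1 = (j : ℕ) by omega))
      rw [Nat.card_congr e]
      rw [card_split_s5 _ (fun y => y ⟨1, by omega⟩)]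
      have split1 : ∀ c : Bool,
          Nat.card {y : Fin (ops.length + 2) → Bool //
            (y ⟨0, by omega⟩ = b ∧ (b = app op a (y ⟨1, by omega⟩) ∧ sat ops y)) ∧
              y ⟨1, by omega⟩ = c}
          = if b = app op a c then h ops b c else 0 := by
        intro c
        rw [← ih b c, ← card_guard]
        apply Nat.card_congr
        apply Equiv.subtypeEquivRight
        intro y
        constructor
        · rintro ⟨⟨h0, h1, h2⟩, h3⟩
          rw [h3] at h1
          exact ⟨h1, h0, h3, h2⟩
        · rintro ⟨h1, h0, h3, h2⟩
          rw [← h3] at h1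
          exact ⟨⟨h0, h1, h2⟩, h3⟩
      rw [split1 false, split1 true]
      rfl

lemma F_eq (ops : List Bool) : F ops = h ops false false + h ops true true := by
  unfold F
  rw [Nat.card_congr (Equiv.subtypeEquivRight (fun x => fixed_iff ops x))]
  rw [card_split_s5 _ (fun x => x ⟨0, by omega⟩)]
  rw [← card_sat ops false false, ← card_sat ops true true]
  congr 1
  · apply Nat.card_congr
    apply Equiv.subtypeEquivRight
    intro x
    constructor
    · rintro ⟨⟨h01, hs⟩, h0⟩
      exact ⟨h0, h01.symm.trans h0, hs⟩
    · rintro ⟨h0, h1, hs⟩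
      exact ⟨⟨h0.trans h1.symm, hs⟩, h0⟩
  · apply Nat.card_congr
    apply Equiv.subtypeEquivRight
    intro x
    constructor
    · rintro ⟨⟨h01, hs⟩, h0⟩
      exact ⟨h0, h01.symm.trans h0, hs⟩
    · rintro ⟨h0, h1, hs⟩
      exact ⟨⟨h0.trans h1.symm, hs⟩, h0⟩

lemma h_cons_cong (op : Bool) {M M' : List Bool}
    (H : ∀ a c, h M a c = h M' a c) (a c : Bool) :
    h (op :: M) a c = h (op :: M') a c := by
  simp only [h]
  rw [H c false, H c true]

lemma h_app_cong : ∀ (P : List Bool) {M M' : List Bool},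
    (∀ a c, h M a c = h M' a c) → ∀ a c, h (P ++ M) a c = h (P ++ M') a c := by
  intro P
  induction P with
  | nil => intro M M' H a c; simpa using H a c
  | cons op P ih =>
      intro M M' H a c
      simp only [List.cons_append]
      exact h_cons_cong op (ih H) a c

lemma stab (b : Bool) (L : List Bool) (a c : Bool) :
    h (b :: b :: b :: L) a c = h (b :: b :: L) a c := by
  cases b <;> cases a <;> cases c <;> simp [h, app] <;> omega

lemma clip (b : Bool) : ∀ (k : ℕ), 2 ≤ k → ∀ (L : List Bool) (a c : Bool),
    h (List.replicate k b ++ L) a c = h (b :: b :: L) a c := by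
  intro k
  induction k with
  | zero => omega
  | succ k ihk =>
      intro hk L a c
      rcases Nat.lt_or_ge k 2 with h2 | h2
      · have hk1 : k = 1 := by omega
        subst hk1
        rfl
      · have e1 : List.replicate (k + 1) b ++ L = b :: (List.replicate k b ++ L) := by
          simp [List.replicate_succ]
        rw [e1]
        exact (h_cons_cong b (ihk h2 L) a c).trans (stab b L a c)

lemma clip' (k : ℕ) (b : Bool) (L : List Bool) (a c : Bool) :
    h (List.replicate k b ++ L) a c = h (List.replicate (min k 2) b ++ L) a c := by
  rcases Nat.lt_or_ge k 2 with h2 | h2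
  · rw [show min k 2 = k by omega]
  · rw [show min k 2 = 2 by omega]
    exact clip b k h2 L a c

lemma base_id (b a c : Bool) (k₁ k₂ k₃ : ℕ) (h₁ : 1 ≤ k₁) (h₂ : 1 ≤ k₂) (h₃ : 1 ≤ k₃) :
    h (List.replicate k₁ b ++ (List.replicate k₂ (!b) ++ List.replicate k₃ b)) a c =
      h (List.replicate k₁ b ++ List.replicate (k₂ - 1) (!b)) a c +
      h (List.replicate (k₁ - 1) b) a c := by
  have c3 : ∀ a c, h (List.replicate k₃ b) a c = h (List.replicate (min k₃ 2) b) a c := by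
    intro a c
    rw [← List.append_nil (List.replicate k₃ b),
        ← List.append_nil (List.replicate (min k₃ 2) b)]
    exact clip' k₃ b [] a c
  have c3' : ∀ a c, h (List.replicate k₂ (!b) ++ List.replicate k₃ b) a c
      = h (List.replicate (min k₂ 2) (!b) ++ List.replicate (min k₃ 2) b) a c := by
    intro a c
    rw [clip' k₂ (!b) _ a c]
    exact h_app_cong (List.replicate (min k₂ 2) (!b)) c3 a c
  have cL : h (List.replicate k₁ b ++ (List.replicate k₂ (!b) ++ List.replicate k₃ b)) a c
      = h (List.replicate (min k₁ 2) b ++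
          (List.replicate (min k₂ 2) (!b) ++ List.replicate (min k₃ 2) b)) a c := by
    rw [clip' k₁ b _ a c]
    exact h_app_cong (List.replicate (min k₁ 2) b) c3' a c
  have cY : h (List.replicate k₁ b ++ List.replicate (k₂ - 1) (!b)) a c
      = h (List.replicate (min k₁ 2) b ++ List.replicate (min (k₂ - 1) 2) (!b)) a c := by
    rw [clip' k₁ b _ a c]
    refine h_app_cong (List.replicate (min k₁ 2) b) ?_ a c
    intro a c
    rw [← List.append_nil (List.replicate (k₂ - 1) (!b)),
        ← List.append_nil (List.replicate (min (k₂ - 1) 2) (!b))]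
    exact clip' (k₂ - 1) (!b) [] a c
  have cZ : h (List.replicate (k₁ - 1) b) a c
      = h (List.replicate (min (k₁ - 1) 2) b) a c := by
    rw [← List.append_nil (List.replicate (k₁ - 1) b),
        ← List.append_nil (List.replicate (min (k₁ - 1) 2) b)]
    exact clip' (k₁ - 1) b [] a c
  rw [cL, cY, cZ]
  have m1 : min k₁ 2 = 1 ∧ min (k₁ - 1) 2 = 0 ∨ min k₁ 2 = 2 ∧ min (k₁ - 1) 2 = 1 ∨
      min k₁ 2 = 2 ∧ min (k₁ - 1) 2 = 2 := by omega
  have m2 : min k₂ 2 = 1 ∧ min (k₂ - 1) 2 = 0 ∨ min k₂ 2 = 2 ∧ min (k₂ - 1) 2 = 1 ∨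
      min k₂ 2 = 2 ∧ min (k₂ - 1) 2 = 2 := by omega
  have m3 : min k₃ 2 = 1 ∨ min k₃ 2 = 2 := by omega
  clear c3 c3' cL cY cZ h₁ h₂ h₃
  rcases m1 with ⟨e1, e1'⟩ | ⟨e1, e1'⟩ | ⟨e1, e1'⟩ <;>
    rcases m2 with ⟨e2, e2'⟩ | ⟨e2, e2'⟩ | ⟨e2, e2'⟩ <;>
    rcases m3 with e3 | e3 <;>
    rw [e1, e1', e2, e2', e3] <;>
    cases b <;> cases a <;> cases c <;> decide

lemma key_h (b : Bool) (k₁ k₂ k₃ : ℕ) (h₁ : 1 ≤ k₁) (h₂ : 1 ≤ k₂) (h₃ : 1 ≤ k₃) :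
    ∀ (P : List Bool) (a c : Bool),
      h (P ++ (List.replicate k₁ b ++ (List.replicate k₂ (!b) ++ List.replicate k₃ b))) a c =
        h (P ++ (List.replicate k₁ b ++ List.replicate (k₂ - 1) (!b))) a c +
        h (P ++ List.replicate (k₁ - 1) b) a c := by
  intro P
  induction P with
  | nil => intro a c; simpa using base_id b a c k₁ k₂ k₃ h₁ h₂ h₃
  | cons op P ih =>
      intro a c
      simp only [List.cons_append, h, List.append_eq]
      rw [ih c false, ih c true]
      split_ifs <;> omega

lemma key (P : List Bool) (b : Bool) (k₁ k₂ k₃ : ℕ)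
    (h₁ : 1 ≤ k₁) (h₂ : 1 ≤ k₂) (h₃ : 1 ≤ k₃) :
    F (P ++ (List.replicate k₁ b ++ (List.replicate k₂ (!b) ++ List.replicate k₃ b))) =
      F (P ++ (List.replicate k₁ b ++ List.replicate (k₂ - 1) (!b))) +
      F (P ++ List.replicate (k₁ - 1) b) := by
  rw [F_eq, F_eq, F_eq, key_h b k₁ k₂ k₃ h₁ h₂ h₃ P false false,
    key_h b k₁ k₂ k₃ h₁ h₂ h₃ P true true]
  omega

lemma runOps_append : ∀ (T S : List ℕ), runOps (T ++ S) =
    runOps T ++ (if T.length % 2 = 0 then runOps S else (runOps S).map (fun b => !b)) := by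
  intro T
  induction T with
  | nil => intro S; simp [runOps]
  | cons k T ih =>
      intro S
      simp only [List.cons_append, runOps, List.length_cons, List.append_eq]
      rw [ih S]
      by_cases hp : T.length % 2 = 0
      · rw [if_pos hp, if_neg (by omega)]
        simp [List.map_append, List.append_assoc]
      · rw [if_neg hp, if_pos (by omega)]
        simp only [List.map_append, List.append_assoc, List.map_map]
        congr 1
        congr 1
        simp [Function.comp_def, Bool.not_not]
/-- right-end recursion of the main theorem:
`𝔉(…,k_{m-2},k_{m-1},k_m) = 𝔉(…,k_{m-2},k_{m-1}-1) + 𝔉(…,k_{m-2}-1)`. -/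
theorem andor_open_chain_right_recursion (k₁ k₂ k₃ : ℕ) (T : List ℕ)
    (hk₁ : 1 ≤ k₁) (hk₂ : 1 ≤ k₂) (hk₃ : 1 ≤ k₃) (hT : ∀ k ∈ T, 1 ≤ k) :
    Fr (T ++ [k₁, k₂, k₃]) = Fr (T ++ [k₁, k₂ - 1]) + Fr (T ++ [k₁ - 1]) := by
  unfold Fr
  rw [runOps_append T [k₁, k₂, k₃], runOps_append T [k₁, k₂ - 1], runOps_append T [k₁ - 1]]
  have r3 : runOps [k₁, k₂, k₃] =
      List.replicate k₁ true ++ (List.replicate k₂ false ++ List.replicate k₃ true) := by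
    simp [runOps, List.map_append, List.map_replicate, List.map_map, Function.comp_def]
  have r2 : runOps [k₁, k₂ - 1] =
      List.replicate k₁ true ++ List.replicate (k₂ - 1) false := by
    simp [runOps, List.map_replicate]
  have r1 : runOps [k₁ - 1] = List.replicate (k₁ - 1) true := by
    simp [runOps]
  rw [r1, r2, r3]
  by_cases hp : T.length % 2 = 0
  · rw [if_pos hp, if_pos hp, if_pos hp]
    exact key (runOps T) true k₁ k₂ k₃ hk₁ hk₂ hk₃
  · rw [if_neg hp, if_neg hp, if_neg hp]
    have hkey := key (runOps T) false k₁ k₂ k₃ hk₁ hk₂ hk₃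
    simpa [List.map_append, List.map_replicate] using hkey
end

section
/- For all positive natural numbers k_1, k_2 one has 𝔉([k_1, k_2]) = 3, and for every natural number k ≥ 0 one has 𝔉([k]) = 2; also 𝔉([]) = 2 (the network on two nodes given by f(x_1,x_2) = (x_2,x_1)). -/
lemma xeq {N : ℕ} (x : Fin N → Bool) {a b : ℕ} (ha : a < N) (hb : b < N) (hab : a = b) :
    x ⟨a, ha⟩ = x ⟨b, hb⟩ := by subst hab; rfl

lemma chain_fix_zero (ops : List Bool) (x : Fin (ops.length + 2) → Bool)
    (h : chainMap ops x = x) : x ⟨1, by omega⟩ = x ⟨0, by omega⟩ := by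
  have h' := congrFun h ⟨0, by omega⟩
  unfold chainMap at h'
  rw [dif_pos rfl] at h'
  exact h'

lemma chain_fix_last (ops : List Bool) (x : Fin (ops.length + 2) → Bool)
    (h : chainMap ops x = x) : x ⟨ops.length, by omega⟩ = x ⟨ops.length + 1, by omega⟩ := by
  have h' := congrFun h ⟨ops.length + 1, by omega⟩
  unfold chainMap at h'
  rw [dif_neg (by simp), dif_pos rfl] at h'
  exact h'

lemma chain_fix_mid (ops : List Bool) (x : Fin (ops.length + 2) → Bool)
    (h : chainMap ops x = x) (j : ℕ) (hj : j < ops.length) :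
    (if ops.get ⟨j, hj⟩ then x ⟨j, by omega⟩ && x ⟨j + 2, by omega⟩
      else x ⟨j, by omega⟩ || x ⟨j + 2, by omega⟩) = x ⟨j + 1, by omega⟩ := by
  have h' := congrFun h ⟨j + 1, by omega⟩
  unfold chainMap at h'
  rw [dif_neg (by simp), dif_neg (by simp; omega)] at h'
  simpa using h'

lemma const_fixed (ops : List Bool) (c : Bool) :
    chainMap ops (fun _ => c) = (fun _ => c) := by
  funext i
  unfold chainMap
  split_ifs <;> simp

lemma F_eq_ncard (ops : List Bool) :
    F ops = ({x | chainMap ops x = x} : Set (Fin (ops.length + 2) → Bool)).ncard := by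
  unfold F
  exact Nat.card_coe_set_eq _

lemma F_allAnd (ops : List Bool)
    (hget : ∀ j (hj : j < ops.length), ops.get ⟨j, hj⟩ = true) : F ops = 2 := by
  have hset : {x : Fin (ops.length + 2) → Bool | chainMap ops x = x} =
      {(fun _ => false), (fun _ => true)} := by
    ext x
    simp only [Set.mem_setOf_eq, Set.mem_insert_iff, Set.mem_singleton_iff]
    constructor
    · intro hx
      have key : ∀ m, ∀ hm : m < ops.length + 2, x ⟨m, hm⟩ = x ⟨0, by omega⟩ := by
        intro m
        induction m using Nat.strong_induction_on with
        | _ m ih =>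
        intro hm
        rcases m with _ | (_ | j)
        · rfl
        · exact chain_fix_zero ops x hx
        · rcases h0 : x ⟨0, by omega⟩ with _ | _
          · -- x 0 = false
            by_cases hc : j + 1 < ops.length
            · have e := chain_fix_mid ops x hx (j + 1) hc
              rw [hget (j + 1) hc, if_pos rfl] at e
              have h1 : x ⟨j + 1, by omega⟩ = false := by
                rw [ih (j + 1) (by omega) (by omega), h0]
              rw [h1, Bool.false_and] at e
              exact e.symm
            · have hl : ops.length = j + 1 := by omega
              have e := chain_fix_last ops x hx
              have h1 : x ⟨ops.length, by omega⟩ = false := by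
                rw [xeq x (by omega) (by omega) hl]
                rw [ih (j + 1) (by omega) (by omega), h0]

              calc x ⟨j + 1 + 1, hm⟩ = x ⟨ops.length + 1, by omega⟩ := xeq x _ _ (by omega)
                _ = x ⟨ops.length, by omega⟩ := (chain_fix_last ops x hx).symm
                _ = false := h1
          · -- x 0 = true
            have hc : j < ops.length := by omega
            have e := chain_fix_mid ops x hx j hc
            rw [hget j hc, if_pos rfl] at e
            have h1 : x ⟨j, by omega⟩ = true := by
              rw [ih j (by omega) (by omega), h0]
            have h2 : x ⟨j + 1, by omega⟩ = true := by
              rw [ih (j + 1) (by omega) (by omega), h0]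
            rw [h1, h2, Bool.true_and] at e
            exact e
      rcases h0 : x ⟨0, by omega⟩ with _ | _
      · left; funext i; rcases i with ⟨m, hm⟩; rw [key m hm, h0]
      · right; funext i; rcases i with ⟨m, hm⟩; rw [key m hm, h0]
    · rintro (rfl | rfl) <;> exact const_fixed ops _
  rw [F_eq_ncard, hset, Set.ncard_pair]
  intro hcontra
  have := congrFun hcontra ⟨0, by omega⟩
  simp at this


def fmid (N t : ℕ) : Fin N → Bool := fun i => decide (t < (i : ℕ))

lemma F_andor (ops : List Bool) (t : ℕ) (ht1 : 1 ≤ t) (ht2 : t < ops.length)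
    (hget : ∀ j (hj : j < ops.length), ops.get ⟨j, hj⟩ = decide (j < t)) :
    F ops = 3 := by
  have hmid_fixed : chainMap ops (fmid (ops.length + 2) t) = fmid (ops.length + 2) t := by
    funext i
    rcases i with ⟨m, hm⟩
    unfold chainMap
    by_cases hm0 : m = 0
    · rw [dif_pos hm0]
      show decide (t < 1) = decide (t < m)
      rw [decide_eq_false (by omega), decide_eq_false (by omega)]
    · rw [dif_neg hm0]
      by_cases hmn : m = ops.length + 1
      · rw [dif_pos hmn]
        show decide (t < ops.length) = decide (t < m)
        rw [decide_eq_true (by omega), decide_eq_true (by omega)]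
      · rw [dif_neg hmn]
        simp only [Fin.val_mk]
        rw [hget (m - 1) (by omega)]
        by_cases hc : m ≤ t
        · rw [if_pos (by rw [decide_eq_true_eq]; omega)]
          show (decide (t < m - 1) && decide (t < m + 1)) = decide (t < m)
          rw [decide_eq_false (show ¬ t < m - 1 by omega), Bool.false_and,
            decide_eq_false (show ¬ t < m by omega)]
        · rw [if_neg (by rw [decide_eq_true_eq]; omega)]
          show (decide (t < m - 1) || decide (t < m + 1)) = decide (t < m)
          rw [decide_eq_true (show t < m + 1 by omega), Bool.or_true,
            decide_eq_true (show t < m by omega)]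
  have hset : {x : Fin (ops.length + 2) → Bool | chainMap ops x = x} =
      {(fun _ => false), fmid (ops.length + 2) t, (fun _ => true)} := by
    ext x
    simp only [Set.mem_setOf_eq, Set.mem_insert_iff, Set.mem_singleton_iff]
    constructor
    · intro hx
      have fwdF : x ⟨0, by omega⟩ = false →
          ∀ m, m ≤ t → ∀ hm : m < ops.length + 2, x ⟨m, hm⟩ = false := by
        intro ha m
        induction m using Nat.strong_induction_on with
        | _ m ih =>
        intro hmt hm
        rcases m with _ | (_ | j)
        · exact ha
        · rw [chain_fix_zero ops x hx]; exact ha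
        · have hj : j + 1 < ops.length := by omega
          have e := chain_fix_mid ops x hx (j + 1) hj
          rw [hget (j + 1) hj, if_pos (by rw [decide_eq_true_eq]; omega)] at e
          rw [ih (j + 1) (by omega) (by omega) (by omega), Bool.false_and] at e
          exact e.symm
      have fwdT : x ⟨0, by omega⟩ = true →
          ∀ m, m ≤ t + 1 → ∀ hm : m < ops.length + 2, x ⟨m, hm⟩ = true := by
        intro ha m
        induction m using Nat.strong_induction_on with
        | _ m ih =>
        intro hmt hm
        rcases m with _ | (_ | j)
        · exact ha
        · rw [chain_fix_zero ops x hx]; exact ha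
        · have hj : j < ops.length := by omega
          have e := chain_fix_mid ops x hx j hj
          rw [hget j hj, if_pos (by rw [decide_eq_true_eq]; omega)] at e
          rw [ih j (by omega) (by omega) (by omega),
            ih (j + 1) (by omega) (by omega) (by omega), Bool.true_and] at e
          exact e
      have bwdT : x ⟨ops.length + 1, by omega⟩ = true →
          ∀ m, t + 1 ≤ m → ∀ hm : m < ops.length + 2, x ⟨m, hm⟩ = true := by
        intro hb
        have key : ∀ d, d ≤ ops.length - t →
            x ⟨ops.length + 1 - d, by omega⟩ = true := by
          intro d
          induction d using Nat.strong_induction_on with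
          | _ d ih =>
          intro hd
          rcases d with _ | (_ | e)
          · rw [xeq x (by omega) (by omega) (by omega : ops.length + 1 - 0 = ops.length + 1)]
            exact hb
          · rw [xeq x (by omega) (by omega) (by omega : ops.length + 1 - 1 = ops.length)]
            rw [chain_fix_last ops x hx]
            exact hb
          · have hj : ops.length - e - 2 < ops.length := by omega
            have e' := chain_fix_mid ops x hx (ops.length - e - 2) hj
            rw [hget _ hj, if_neg (by rw [decide_eq_true_eq]; omega)] at e'
            rw [xeq x (by omega) (by omega)
                (by omega : ops.length - e - 2 + 2 = ops.length + 1 - (e + 1)),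
              ih (e + 1) (by omega) (by omega), Bool.or_true] at e'
            rw [xeq x (by omega) (by omega)
              (by omega : ops.length + 1 - (e + 1 + 1) = ops.length - e - 2 + 1)]
            exact e'.symm
        intro m hmt hm
        rw [xeq x (by omega) (by omega)
          (by omega : m = ops.length + 1 - (ops.length + 1 - m))]
        exact key (ops.length + 1 - m) (by omega)
      have bwdF : x ⟨ops.length + 1, by omega⟩ = false →
          ∀ m, t ≤ m → ∀ hm : m < ops.length + 2, x ⟨m, hm⟩ = false := by
        intro hb
        have key : ∀ d, d ≤ ops.length + 1 - t →
            x ⟨ops.length + 1 - d, by omega⟩ = false := by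
          intro d
          induction d using Nat.strong_induction_on with
          | _ d ih =>
          intro hd
          rcases d with _ | (_ | e)
          · rw [xeq x (by omega) (by omega) (by omega : ops.length + 1 - 0 = ops.length + 1)]
            exact hb
          · rw [xeq x (by omega) (by omega) (by omega : ops.length + 1 - 1 = ops.length)]
            rw [chain_fix_last ops x hx]
            exact hb
          · have hj : ops.length - e - 1 < ops.length := by omega
            have e' := chain_fix_mid ops x hx (ops.length - e - 1) hj
            rw [hget _ hj, if_neg (by rw [decide_eq_true_eq]; omega)] at e'
            rw [xeq x (by omega) (by omega)
                (by omega : ops.length - e - 1 + 1 = ops.length + 1 - (e + 1)),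
              ih (e + 1) (by omega) (by omega)] at e'
            rw [xeq x (by omega) (by omega)
              (by omega : ops.length + 1 - (e + 1 + 1) = ops.length - e - 1)]
            exact (Bool.or_eq_false_iff.mp e').1
        intro m hmt hm
        rw [xeq x (by omega) (by omega)
          (by omega : m = ops.length + 1 - (ops.length + 1 - m))]
        exact key (ops.length + 1 - m) (by omega)
      cases ha : x ⟨0, by omega⟩ with
      | false =>
        cases hb : x ⟨ops.length + 1, by omega⟩ with
        | false =>
          left; funext i; rcases i with ⟨m, hm⟩
          show x ⟨m, hm⟩ = false
          by_cases hmt : m ≤ t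
          · exact fwdF ha m hmt hm
          · exact bwdF hb m (by omega) hm
        | true =>
          right; left; funext i; rcases i with ⟨m, hm⟩
          show x ⟨m, hm⟩ = decide (t < m)
          by_cases hmt : m ≤ t
          · rw [fwdF ha m hmt hm, decide_eq_false (by omega)]
          · rw [bwdT hb m (by omega) hm, decide_eq_true (by omega)]
      | true =>
        cases hb : x ⟨ops.length + 1, by omega⟩ with
        | false =>
          exfalso
          have h1 := fwdT ha (t + 1) le_rfl (by omega)
          have h2 := bwdF hb (t + 1) (by omega) (by omega)
          rw [h1] at h2
          exact Bool.noConfusion h2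
        | true =>
          right; right; funext i; rcases i with ⟨m, hm⟩
          show x ⟨m, hm⟩ = true
          by_cases hmt : m ≤ t
          · exact fwdT ha m (by omega) hm
          · exact bwdT hb m (by omega) hm
    · rintro (rfl | rfl | rfl)
      · exact const_fixed ops _
      · exact hmid_fixed
      · exact const_fixed ops _
  rw [F_eq_ncard, hset]
  have hne1 : fmid (ops.length + 2) t ≠ (fun _ => true) := by
    intro h
    have h' := congrFun h ⟨0, by omega⟩
    rw [show (fmid (ops.length + 2) t) ⟨0, by omega⟩ = false by
      simp only [fmid]; rw [decide_eq_false (by omega)]] at h'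
    exact Bool.noConfusion h'
  have hne0 : (fun _ => false : Fin (ops.length + 2) → Bool) ∉
      ({fmid (ops.length + 2) t, (fun _ => true)} : Set (Fin (ops.length + 2) → Bool)) := by
    simp only [Set.mem_insert_iff, Set.mem_singleton_iff]
    push_neg
    constructor
    · intro h
      have h' := congrFun h ⟨ops.length + 1, by omega⟩
      rw [show (fmid (ops.length + 2) t) ⟨ops.length + 1, by omega⟩ = true by
        simp only [fmid]; rw [decide_eq_true (show t < (ops.length + 1 : ℕ) by omega)]] at h'
      exact Bool.noConfusion h'
    · intro h
      have h' := congrFun h ⟨0, by omega⟩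
      exact Bool.noConfusion h'
  rw [Set.ncard_insert_of_notMem hne0, Set.ncard_pair hne1]

/-- base cases `𝔉(k₁,k₂) = 3`, `𝔉(k) = 2`, `𝔉() = 2`. -/
theorem andor_open_chain_base_cases :
    (∀ k₁ k₂ : ℕ, 1 ≤ k₁ → 1 ≤ k₂ → Fr [k₁, k₂] = 3) ∧
    (∀ k : ℕ, Fr [k] = 2) ∧
    Fr [] = 2 := by
  refine ⟨?_, ?_, ?_⟩
  · intro k₁ k₂ h1 h2
    unfold Fr
    rw [show runOps [k₁, k₂] = List.replicate k₁ true ++ List.replicate k₂ false from by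
      simp [runOps]]
    refine F_andor _ k₁ h1 (by simp; omega) ?_
    intro j hj
    rcases lt_or_ge j k₁ with h | h
    · rw [List.get_eq_getElem, List.getElem_append_left (by simpa using h)]
      simp [h]
    · rw [List.get_eq_getElem, List.getElem_append_right (by simpa using h)]
      simp; omega
  · intro k
    unfold Fr
    rw [show runOps [k] = List.replicate k true from by simp [runOps]]
    exact F_allAnd _ (fun j hj => by simp)
  · unfold Fr
    exact F_allAnd _ (fun j hj => by simp [runOps] at hj)
end

section
/- For every natural number n ≥ 0, the open-chain AND-OR network whose run-length list consists of n + 2 copies of 2 satisfies 𝔉([2,2,…,2]) = b_{n+3}, where (b_k) is the Fibonacci-type sequence with b_0 = b_1 = 1 and b_k = b_{k−1} + b_{k−2} (equivalently, 𝔉([2,2,…,2]) = Fib(n+4), with Fib(1) = Fib(2) = 1). -/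
def step (op a c : Bool) : Bool := if op then a && c else a || c

def Vp : (ops : List Bool) → Bool → Bool → (Fin ops.length → Bool) → Prop
  | [], a, b, _ => a = b
  | op :: t, a, b, y => b = step op a (y ⟨0, Nat.succ_pos _⟩) ∧ Vp t b (y ⟨0, Nat.succ_pos _⟩) (fun i => y i.succ)

def VpDec : (ops : List Bool) → (a b : Bool) → (y : Fin ops.length → Bool) →
    Decidable (Vp ops a b y)
  | [], a, b, _ => inferInstanceAs (Decidable (a = b))
  | op :: t, a, b, y =>
      haveI := VpDec t b (y ⟨0, Nat.succ_pos _⟩) (fun i => y i.succ)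
      inferInstanceAs (Decidable (_ ∧ _))

instance (ops : List Bool) (a b : Bool) (y : Fin ops.length → Bool) :
    Decidable (Vp ops a b y) := VpDec ops a b y

def Cnt : List Bool → Bool → Bool → ℕ
  | [], a, b => if a = b then 1 else 0
  | op :: t, a, b =>
      (if b = step op a false then Cnt t b false else 0) +
      (if b = step op a true then Cnt t b true else 0)

def consEquiv {k : ℕ} (P : Bool → (Fin k → Bool) → Prop) :
    {y : Fin (k+1) → Bool // P (y 0) (fun i => y i.succ)} ≃
      Σ c : Bool, {y' : Fin k → Bool // P c y'} where
  toFun y := ⟨y.1 0, fun i => y.1 i.succ, y.2⟩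
  invFun p := ⟨Fin.cons p.1 p.2.1, by
    simpa only [Fin.cons_zero, Fin.cons_succ] using p.2.2⟩
  left_inv y := Subtype.ext (Fin.cons_self_tail y.1)
  right_inv p := rfl

lemma card_and_left (p : Prop) [Decidable p] (q : (Fin k → Bool) → Prop)
    [DecidablePred q] :
    Fintype.card {y : Fin k → Bool // p ∧ q y} =
      if p then Fintype.card {y : Fin k → Bool // q y} else 0 := by
  by_cases hp : p
  · simp only [hp, if_true]
    exact Fintype.card_congr (Equiv.subtypeEquivRight (by tauto))
  · rw [if_neg hp]
    haveI : IsEmpty {y : Fin k → Bool // p ∧ q y} := ⟨fun y => hp y.2.1⟩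
    exact Fintype.card_eq_zero

lemma card_Vp : ∀ (ops : List Bool) (a b : Bool),
    Fintype.card {y : Fin ops.length → Bool // Vp ops a b y} = Cnt ops a b
  | [], a, b => by
    by_cases h : a = b
    · rw [Cnt, if_pos h]
      have : ∀ y : Fin ([] : List Bool).length → Bool, Vp [] a b y := fun _ => h
      rw [Fintype.card_congr (Equiv.subtypeUnivEquiv this)]
      simp
    · rw [Cnt, if_neg h]
      haveI : IsEmpty {y : Fin ([] : List Bool).length → Bool // Vp [] a b y} :=
        ⟨fun y => h y.2⟩
      exact Fintype.card_eq_zero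
  | op :: t, a, b => by
    have e : {y : Fin (op :: t).length → Bool // Vp (op :: t) a b y} ≃
        Σ c : Bool, {y' : Fin t.length → Bool // b = step op a c ∧ Vp t b c y'} :=
      consEquiv (fun c y' => b = step op a c ∧ Vp t b c y')
    rw [Fintype.card_congr e, Fintype.card_sigma, Fintype.sum_bool]
    rw [card_and_left, card_and_left, card_Vp t b true, card_Vp t b false]
    rw [Cnt]
    ring

lemma cnt_map_not : ∀ (L : List Bool) (a b : Bool),
    Cnt (L.map (fun x => !x)) a b = Cnt L (!a) (!b)
  | [], a, b => by cases a <;> cases b <;> simp [Cnt]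
  | op :: t, a, b => by
    have h1 := cnt_map_not t b true
    have h2 := cnt_map_not t b false
    simp only [List.map_cons, Cnt] at *
    cases op <;> cases a <;> cases b <;>
      simp_all [step, Nat.add_comm]

def Pm (m : ℕ) : List Bool := runOps (List.replicate m 2)

lemma Cnt_cons (op : Bool) (t : List Bool) (a b : Bool) :
    Cnt (op :: t) a b =
      (if b = step op a false then Cnt t b false else 0) +
      (if b = step op a true then Cnt t b true else 0) := rfl

lemma Pm_succ (m : ℕ) : Pm (m+1) = true :: true :: (Pm m).map (fun x => !x) := by
  simp [Pm, List.replicate_succ, runOps, List.replicate]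

lemma key_s8 : ∀ m : ℕ,
    Cnt (Pm (m+1)) true true = Nat.fib (m+1) ∧
    Cnt (Pm (m+1)) false false = Nat.fib (m+2) ∧
    Cnt (Pm (m+1)) true false = Nat.fib (m+2) ∧
    Cnt (Pm (m+1)) false true = 0 := by
  intro m
  induction m with
  | zero => refine ⟨?_, ?_, ?_, ?_⟩ <;> decide
  | succ k ih =>
    obtain ⟨h1, h2, h3, h4⟩ := ih
    have hm := cnt_map_not (Pm (k+1))
    rw [Pm_succ (k+1)]
    refine ⟨?_, ?_, ?_, ?_⟩ <;>
      simp only [Cnt_cons, step, hm, Bool.not_true, Bool.not_false, h1, h2, h3, h4] <;>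
      simp <;> simp [Nat.fib_add_two] <;> omega


lemma smk {N : ℕ} (s : Fin N → Bool) {a b : ℕ} (ha : a < N) (hb : b < N)
    (h : a = b) : s ⟨a, ha⟩ = s ⟨b, hb⟩ := by subst h; rfl

lemma Vp_iff : ∀ (ops : List Bool) (s : Fin (ops.length + 2) → Bool),
    Vp ops (s ⟨0, by omega⟩) (s ⟨1, by omega⟩)
        (fun i => s ⟨(i : ℕ) + 2, by omega⟩) ↔
      ((∀ j : Fin ops.length, s ⟨(j : ℕ) + 1, by omega⟩ =
          step (ops.get j) (s ⟨(j : ℕ), by omega⟩) (s ⟨(j : ℕ) + 2, by omega⟩)) ∧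
        s ⟨ops.length, by omega⟩ = s ⟨ops.length + 1, by omega⟩)
  | [], s => by
    simp [Vp]
  | op :: t, s => by
    have ih := Vp_iff t (fun i => s ⟨(i : ℕ) + 1, by simp only [List.length_cons]; omega⟩)
    constructor
    · rintro ⟨h0, hv⟩
      obtain ⟨hall, hlast⟩ := ih.mp hv
      refine ⟨?_, hlast⟩
      rintro ⟨jv, hj⟩
      cases jv with
      | zero => exact h0
      | succ j' => exact hall ⟨j', by simp only [List.length_cons] at hj; omega⟩
    · rintro ⟨hall, hlast⟩
      refine ⟨hall ⟨0, by simp⟩, ih.mpr ⟨?_, hlast⟩⟩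
      intro j
      exact hall ⟨(j : ℕ) + 1, by simp only [List.length_cons]; omega⟩

lemma chainMap_fix_iff (ops : List Bool) (x : Fin (ops.length + 2) → Bool) :
    chainMap ops x = x ↔
      (x ⟨1, by omega⟩ = x ⟨0, by omega⟩ ∧
       (∀ j : Fin ops.length, x ⟨(j : ℕ) + 1, by omega⟩ =
          step (ops.get j) (x ⟨(j : ℕ), by omega⟩) (x ⟨(j : ℕ) + 2, by omega⟩)) ∧
       x ⟨ops.length, by omega⟩ = x ⟨ops.length + 1, by omega⟩) := by
  constructor
  · intro h
    have hc : ∀ i, chainMap ops x i = x i := fun i => congrFun h i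
    refine ⟨?_, ?_, ?_⟩
    · have h0 := hc ⟨0, by omega⟩
      simpa [chainMap] using h0
    · rintro ⟨jv, hj⟩
      have hi := hc ⟨jv + 1, by omega⟩
      rw [chainMap] at hi
      rw [dif_neg (by simp only [Fin.val_mk]; omega), dif_neg (by simp only [Fin.val_mk]; omega)] at hi
      simp only [Nat.add_sub_cancel] at hi
      rw [← hi, step]
    · have hn := hc ⟨ops.length + 1, by omega⟩
      rw [chainMap] at hn
      rw [dif_neg (by simp only [Fin.val_mk]; omega), dif_pos rfl] at hn
      exact hn
  · rintro ⟨h1, hall, hlast⟩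
    funext i
    rcases i with ⟨iv, hv⟩
    rw [chainMap]
    by_cases h0 : iv = 0
    · subst h0
      rw [dif_pos rfl]
      exact h1
    · by_cases hn : iv = ops.length + 1
      · subst hn
        rw [dif_neg (by simp only [Fin.val_mk]; omega), dif_pos rfl]
        exact hlast
      · rw [dif_neg h0, dif_neg hn]
        have hj := hall ⟨iv - 1, by omega⟩
        simp only [step] at hj
        have e1 : x ⟨iv - 1 + 1, by omega⟩ = x ⟨iv, by omega⟩ := smk x _ _ (by omega)
        have e2 : x ⟨iv - 1 + 2, by omega⟩ = x ⟨iv + 1, by omega⟩ := smk x _ _ (by omega)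
        rw [e1, e2] at hj
        exact hj.symm

lemma fix_iff_Vp (ops : List Bool) (x : Fin (ops.length + 2) → Bool) :
    chainMap ops x = x ↔
      (x ⟨1, by omega⟩ = x ⟨0, by omega⟩ ∧
        Vp ops (x ⟨0, by omega⟩) (x ⟨1, by omega⟩)
          (fun i => x ⟨(i : ℕ) + 2, by omega⟩)) := by
  rw [chainMap_fix_iff, Vp_iff ops x]

def fixEquiv (ops : List Bool) :
    {x : Fin (ops.length + 2) → Bool // chainMap ops x = x} ≃
      Σ a : Bool, {y : Fin ops.length → Bool // Vp ops a a y} where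
  toFun p := ⟨p.1 ⟨0, by omega⟩, ⟨fun i => p.1 ⟨(i : ℕ) + 2, by omega⟩, by
    obtain ⟨h1, hv⟩ := (fix_iff_Vp ops p.1).mp p.2
    exact h1 ▸ hv⟩⟩
  invFun q := ⟨fun i => if h : (i : ℕ) ≤ 1 then q.1
      else q.2.1 ⟨(i : ℕ) - 2, by have := i.isLt; omega⟩,
    (fix_iff_Vp _ _).mpr ⟨rfl, q.2.2⟩⟩
  left_inv p := by
    obtain ⟨h1, _⟩ := (fix_iff_Vp ops p.1).mp p.2
    apply Subtype.ext
    funext i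
    rcases i with ⟨iv, hv⟩
    dsimp only
    split
    · rename_i h
      interval_cases iv
      · exact (smk p.1 _ _ rfl)
      · exact h1.symm ▸ (smk p.1 _ _ rfl)
    · rename_i h
      exact smk p.1 _ _ (by omega)
  right_inv q := rfl

lemma F_eq_s8 (ops : List Bool) :
    Nat.card {x : Fin (ops.length + 2) → Bool // chainMap ops x = x} =
      Cnt ops true true + Cnt ops false false := by
  rw [Nat.card_congr (fixEquiv ops), Nat.card_eq_fintype_card,
    Fintype.card_sigma, Fintype.sum_bool, card_Vp, card_Vp]

/-- the open chain with run-length list `n + 2` copies of `2`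
has `Fib (n+4)` fixed points (`Fib 1 = Fib 2 = 1`). -/
theorem andor_open_chain_double_runs_count (n : ℕ) :
    Fr (List.replicate (n + 2) 2) = Nat.fib (n + 4) := by
  obtain ⟨h1, h2, -, -⟩ := key_s8 (n + 1)
  have hF : Fr (List.replicate (n + 2) 2) =
      Cnt (Pm (n + 2)) true true + Cnt (Pm (n + 2)) false false := F_eq_s8 (Pm (n + 2))
  rw [hF, h1, h2]
  have := Nat.fib_add_two (n := n + 2)
  simp only [show n + 1 + 1 = n + 2 from rfl, show n + 1 + 2 = n + 3 from rfl,
    show n + 2 + 1 = n + 3 from rfl, show n + 2 + 2 = n + 4 from rfl] at *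
  omega
end

section
/- Let ops : ℤ → Bool and let a ≤ b be integers such that ops_i = ops_a for all i ≤ a and ops_i = ops_b for all i ≥ b (i.e., ops is constant on each of the two infinite tails). Then the set of fixed points of the infinite-chain AND-OR network determined by ops is finite, and its cardinality equals F([ops_a, ops_{a+1}, …, ops_b]), the number of fixed points of the open-chain AND-OR network on b − a + 3 nodes whose operator list is the restriction of ops to [a, b]. -/
/-- The infinite-chain AND-OR network map determined by `ops : ℤ → Bool`
(`true` = AND, `false` = OR). -/
def infMap (ops : ℤ → Bool) (x : ℤ → Bool) : ℤ → Bool := fun i =>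
  if ops i then x (i - 1) && x (i + 1) else x (i - 1) || x (i + 1)

/-!
If `ops i = ops (i + 1)`, a fixed point has `x i = x (i + 1)`: of two adjacent AND gates each
output bounds the other from below, of two OR gates from above. Hence a fixed point is constant on
each tail where `ops` is constant, and is determined by its values on the window `a - 1, …, b + 1`.
These values form a fixed point of the open chain with operators `ops a, …, ops b` (its end nodes
copy their neighbours since `ops (a - 1) = ops a` and `ops b = ops (b + 1)`), and conversely every
fixed point of the open chain, extended constantly, is a fixed point of the infinite chain.
-/

theorem Bool.eq_of_same_gate (o p q r s : Bool)
    (hq : (if o then p && r else p || r) = q) (hr : (if o then q && s else q || s) = r) :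
    q = r := by
  revert o p q r s; decide

theorem infMap_eq_self_iff {ops x : ℤ → Bool} :
    infMap ops x = x ↔
      ∀ i, (if ops i then x (i - 1) && x (i + 1) else x (i - 1) || x (i + 1)) = x i :=
  funext_iff

theorem eq_add_one_of_infMap_eq_self {ops x : ℤ → Bool} (hx : infMap ops x = x) {i : ℤ}
    (hi : ops i = ops (i + 1)) : x i = x (i + 1) := by
  have h₁ := infMap_eq_self_iff.mp hx (i + 1)
  rw [add_sub_cancel_right, ← hi] at h₁
  exact Bool.eq_of_same_gate _ _ _ _ _ (infMap_eq_self_iff.mp hx i) h₁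

theorem eq_of_infMap_eq_self_of_ops_const {ops x : ℤ → Bool} (hx : infMap ops x = x) {m n : ℤ}
    (hmn : m ≤ n) (hops : ∀ i, m ≤ i → i ≤ n → ops i = ops m) : x m = x n := by
  induction n, hmn using Int.leInduction with
  | base => rfl
  | succ n hmn ih =>
    rw [ih fun i h₁ h₂ => hops i h₁ (by omega)]
    exact eq_add_one_of_infMap_eq_self hx
      ((hops n hmn (by omega)).trans (hops (n + 1) (by omega) le_rfl).symm)

theorem eq_of_infMap_eq_self_of_le {ops x : ℤ → Bool} (hx : infMap ops x = x) {a : ℤ}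
    (ha : ∀ i ≤ a, ops i = ops a) {i : ℤ} (hi : i ≤ a) : x i = x a :=
  eq_of_infMap_eq_self_of_ops_const hx hi fun j _ hj => (ha j hj).trans (ha i hi).symm

theorem eq_of_infMap_eq_self_of_ge {ops x : ℤ → Bool} (hx : infMap ops x = x) {b : ℤ}
    (hb : ∀ i, b ≤ i → ops i = ops b) {i : ℤ} (hi : b ≤ i) : x i = x b :=
  (eq_of_infMap_eq_self_of_ops_const hx hi fun j hj _ => hb j hj).symm

theorem chainMap_eq_self_iff {L : List Bool} {y : Fin (L.length + 2) → Bool} :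
    chainMap L y = y ↔
      y ⟨1, by omega⟩ = y 0 ∧ y ⟨L.length, by omega⟩ = y ⟨L.length + 1, by omega⟩ ∧
        ∀ k (hk : k < L.length),
          (if L[k] then y ⟨k, by omega⟩ && y ⟨k + 2, by omega⟩
            else y ⟨k, by omega⟩ || y ⟨k + 2, by omega⟩) = y ⟨k + 1, by omega⟩ := by
  constructor
  · intro h
    refine ⟨by simpa [chainMap] using congrFun h 0,
      by simpa [chainMap] using congrFun h ⟨L.length + 1, by omega⟩, fun k hk => ?_⟩
    simpa [chainMap, hk.ne, add_assoc] using congrFun h ⟨k + 1, by omega⟩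
  · rintro ⟨h₀, hlast, hmid⟩
    funext ⟨i, hi⟩
    rcases i with _ | k
    · simpa [chainMap] using h₀
    · by_cases hk : k = L.length
      · subst hk; simpa [chainMap] using hlast
      · simpa [chainMap, hk, add_assoc] using hmid k (by omega)

section Window

variable {α : Type*}

def windowRestrict (c : ℤ) (n : ℕ) (x : ℤ → α) : Fin n → α := fun k => x (c + k)

/-- Reads `y` as values on `c, c + 1, …, c + n` and extends them constantly to all of `ℤ`. -/
def windowExtend (c : ℤ) {n : ℕ} (y : Fin (n + 1) → α) : ℤ → α :=
  fun i => y ⟨min (i - c).toNat n, by omega⟩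

theorem windowExtend_add (c : ℤ) {n : ℕ} (y : Fin (n + 1) → α) {k : ℕ} (hk : k ≤ n) :
    windowExtend c y (c + k) = y ⟨k, by omega⟩ := by
  simp only [windowExtend, add_sub_cancel_left, Int.toNat_natCast, min_eq_left hk]

theorem windowExtend_of_le {c : ℤ} {n : ℕ} (y : Fin (n + 1) → α) {i : ℤ} (hi : i ≤ c) :
    windowExtend c y i = y 0 := by
  simp only [windowExtend, Int.toNat_eq_zero.mpr (sub_nonpos.mpr hi), Nat.zero_min]
  rfl

theorem windowExtend_of_ge {c : ℤ} {n : ℕ} (y : Fin (n + 1) → α) {i : ℤ} (hi : c + n ≤ i) :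
    windowExtend c y i = y (Fin.last n) := by
  simp only [windowExtend, min_eq_right (show n ≤ (i - c).toNat by omega)]
  rfl

theorem windowRestrict_windowExtend (c : ℤ) {n : ℕ} (y : Fin (n + 1) → α) :
    windowRestrict c (n + 1) (windowExtend c y) = y :=
  funext fun k => windowExtend_add c y (Nat.lt_succ_iff.mp k.isLt)

theorem windowExtend_windowRestrict {c : ℤ} {n : ℕ} {x : ℤ → α} (hleft : ∀ i ≤ c, x i = x c)
    (hright : ∀ i, c + n ≤ i → x i = x (c + n)) :
    windowExtend c (windowRestrict c (n + 1) x) = x := by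
  funext i
  rcases le_or_gt i c with hic | hci
  · rw [windowExtend_of_le _ hic, hleft i hic]
    simp [windowRestrict]
  rcases le_or_gt (c + n) i with hni | hin
  · rw [windowExtend_of_ge _ hni, hright i hni]
    simp [windowRestrict]
  · obtain ⟨k, rfl⟩ : ∃ k : ℕ, i = c + k := ⟨(i - c).toNat, by omega⟩
    rw [windowExtend_add c _ (by omega)]
    rfl

end Window

section Chain

variable {ops : ℤ → Bool} {L : List Bool} {c : ℤ}

theorem chainMap_windowRestrict (hL : ∀ k (hk : k < L.length), L[k] = ops (c + 1 + k))
    {x : ℤ → Bool} (hx : infMap ops x = x) (h₀ : x c = x (c + 1))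
    (hlast : x (c + L.length) = x (c + L.length + 1)) :
    chainMap L (windowRestrict c (L.length + 2) x) = windowRestrict c (L.length + 2) x := by
  refine chainMap_eq_self_iff.mpr ⟨?_, ?_, fun k hk => ?_⟩
  · simpa [windowRestrict] using h₀.symm
  · simpa [windowRestrict, add_assoc] using hlast
  · have hk' := infMap_eq_self_iff.mp hx (c + 1 + k)
    rw [← hL k hk, show c + 1 + k - 1 = c + k by ring, show c + 1 + k + 1 = c + (k + 2 : ℕ) by
      push_cast; ring, show c + 1 + k = c + (k + 1 : ℕ) by push_cast; ring] at hk'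
    exact hk'

theorem infMap_windowExtend (hL : ∀ k (hk : k < L.length), L[k] = ops (c + 1 + k))
    {y : Fin (L.length + 2) → Bool} (hy : chainMap L y = y) :
    infMap ops (windowExtend c y) = windowExtend c y := by
  obtain ⟨h₀, hlast, hmid⟩ := chainMap_eq_self_iff.mp hy
  refine infMap_eq_self_iff.mpr fun i => ?_
  have gate_idem (o v : Bool) : (if o then v && v else v || v) = v := by cases o <;> simp
  rcases le_or_gt i c with hic | hci
  · have h₁ : windowExtend c y (i + 1) = y 0 := by
      rcases (show i + 1 ≤ c ∨ i + 1 = c + (1 : ℕ) by push_cast; omega) with h | h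
      · exact windowExtend_of_le y h
      · rw [h, windowExtend_add c y (by omega)]; exact h₀
    rw [h₁, windowExtend_of_le y hic, windowExtend_of_le (i := i - 1) y (by omega), gate_idem]
  rcases le_or_gt (c + (L.length + 1 : ℕ)) i with hni | hin
  · have h₁ : windowExtend c y (i - 1) = y (Fin.last _) := by
      rcases (show c + (L.length + 1 : ℕ) ≤ i - 1 ∨ i - 1 = c + (L.length : ℕ) by
        push_cast at *; omega) with h | h
      · exact windowExtend_of_ge y h
      · rw [h, windowExtend_add c y (by omega)]; exact hlast
    rw [h₁, windowExtend_of_ge y hni, windowExtend_of_ge (i := i + 1) y (by omega), gate_idem]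
  · obtain ⟨k, rfl⟩ : ∃ k : ℕ, i = c + 1 + k := ⟨(i - c - 1).toNat, by omega⟩
    have hk : k < L.length := by push_cast at hin; omega
    rw [← hL k hk, show c + 1 + k - 1 = c + k by ring, show c + 1 + k + 1 = c + (k + 2 : ℕ) by
      push_cast; ring, show c + 1 + k = c + (k + 1 : ℕ) by push_cast; ring,
      windowExtend_add c y (by omega), windowExtend_add c y (by omega),
      windowExtend_add c y (by omega)]
    exact hmid k hk

def fixedPointsEquiv (hL : ∀ k (hk : k < L.length), L[k] = ops (c + 1 + k))
    (hleft : ∀ i ≤ c + 1, ops i = ops (c + 1))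
    (hright : ∀ i, c + L.length ≤ i → ops i = ops (c + L.length)) :
    {x // infMap ops x = x} ≃ {y : Fin (L.length + 2) → Bool // chainMap L y = y} where
  toFun x := ⟨windowRestrict c _ x, chainMap_windowRestrict hL x.2
    (eq_of_infMap_eq_self_of_le x.2 hleft (by omega))
    (eq_of_infMap_eq_self_of_ge x.2 hright (by omega)).symm⟩
  invFun y := ⟨windowExtend c y.1, infMap_windowExtend hL y.2⟩
  left_inv x := Subtype.ext <| windowExtend_windowRestrict
    (fun i hi => (eq_of_infMap_eq_self_of_le x.2 hleft (by omega)).trans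
      (eq_of_infMap_eq_self_of_le x.2 hleft (by omega)).symm)
    (fun i hi => (eq_of_infMap_eq_self_of_ge x.2 hright (by omega)).trans
      (eq_of_infMap_eq_self_of_ge x.2 hright (by omega)).symm)
  right_inv y := Subtype.ext (windowRestrict_windowExtend c y.1)

end Chain

theorem andor_infinite_chain_eventually_constant_general (ops : ℤ → Bool) (a b : ℤ)
    (ha : ∀ i : ℤ, i ≤ a → ops i = ops a)
    (hb : ∀ i : ℤ, b ≤ i → ops i = ops b) :
    {x : ℤ → Bool | infMap ops x = x}.Finite ∧
    Set.ncard {x : ℤ → Bool | infMap ops x = x} =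
      F ((List.range (b - a + 1).toNat).map (fun j => ops (a + j))) := by
  set L := (List.range (b - a + 1).toNat).map (fun j => ops (a + j))
  -- `List.range _ : List ℕ` is coerced to `List ℤ` through the list monad
  have hL_eq : L = (List.range (b - a + 1).toNat).map (fun j : ℕ => ops (a + j)) := by
    change List.map _ (List.flatMap (pure ∘ Nat.cast) _) = _
    rw [List.flatMap_pure_eq_map, List.map_map]
    rfl
  have hlen : (L.length : ℤ) = max (b - a + 1) 0 := by simp [hL_eq]
  have hL : ∀ k (hk : k < L.length), L[k] = ops (a - 1 + 1 + k) := by simp [hL_eq]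
  have hleft : ∀ i ≤ a - 1 + 1, ops i = ops (a - 1 + 1) := by simpa using ha
  have hright : ∀ i, a - 1 + L.length ≤ i → ops i = ops (a - 1 + L.length) := by
    intro i hi
    rw [hb i (by omega), hb (a - 1 + L.length) (by omega)]
  let e := fixedPointsEquiv hL hleft hright
  have : Finite {x : ℤ → Bool | infMap ops x = x} := Finite.of_equiv _ e.symm
  exact ⟨Set.toFinite _, (Nat.card_coe_set_eq _).symm.trans (Nat.card_congr e)⟩

/-- if the operator function of an infinite chain is constant
on both infinite tails `(-∞, a]` and `[b, ∞)`, then the fixed-point set is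
finite, of cardinality `F([ops a, …, ops b])`. -/
theorem andor_infinite_chain_eventually_constant (ops : ℤ → Bool) (a b : ℤ)
    (hab : a ≤ b)
    (ha : ∀ i : ℤ, i ≤ a → ops i = ops a)
    (hb : ∀ i : ℤ, b ≤ i → ops i = ops b) :
    {x : ℤ → Bool | infMap ops x = x}.Finite ∧
    Set.ncard {x : ℤ → Bool | infMap ops x = x} =
      F ((List.range (b - a + 1).toNat).map (fun j => ops (a + j))) :=
  andor_infinite_chain_eventually_constant_general ops a b ha hb
end

section
/- Let ops : ℤ → Bool be such that the set {i : ℤ | ops_i ≠ ops_{i+1}} is infinite (i.e., the operator sequence changes between AND and OR at infinitely many positions). Then the infinite-chain AND-OR network determined by ops has infinitely many fixed points. -/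
lemma fix_down (ops : ℤ → Bool) (i : ℤ) (h1 : ops i = false) (h2 : ops (i+1) = true) :
    infMap ops (fun j => decide (j ≤ i)) = fun j => decide (j ≤ i) := by
  funext j
  simp only [infMap]
  by_cases hoj : ops j = true
  · have hne : j ≠ i := by rintro rfl; rw [h1] at hoj; exact Bool.false_ne_true hoj
    rw [if_pos hoj, Bool.eq_iff_iff]
    simp only [Bool.and_eq_true, decide_eq_true_eq]
    omega
  · have hne : j ≠ i + 1 := by rintro rfl; exact hoj h2
    rw [if_neg hoj, Bool.eq_iff_iff]
    simp only [Bool.or_eq_true, decide_eq_true_eq]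
    omega

lemma fix_up (ops : ℤ → Bool) (i : ℤ) (h1 : ops i = true) (h2 : ops (i+1) = false) :
    infMap ops (fun j => decide (i + 1 ≤ j)) = fun j => decide (i + 1 ≤ j) := by
  funext j
  simp only [infMap]
  by_cases hoj : ops j = true
  · have hne : j ≠ i + 1 := by rintro rfl; rw [h2] at hoj; exact Bool.false_ne_true hoj
    rw [if_pos hoj, Bool.eq_iff_iff]
    simp only [Bool.and_eq_true, decide_eq_true_eq]
    omega
  · have hne : j ≠ i := by rintro rfl; exact hoj h1
    rw [if_neg hoj, Bool.eq_iff_iff]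
    simp only [Bool.or_eq_true, decide_eq_true_eq]
    omega

/-- if the operator sequence of an infinite chain changes
between AND and OR at infinitely many positions, then there are infinitely
many fixed points. -/
theorem andor_infinite_chain_infinitely_many_changes (ops : ℤ → Bool)
    (h : {i : ℤ | ops i ≠ ops (i + 1)}.Infinite) :
    {x : ℤ → Bool | infMap ops x = x}.Infinite := by
  set S := {i : ℤ | ops i ≠ ops (i + 1)} with hS
  set g : ℤ → (ℤ → Bool) := fun i j => if ops i then decide (i + 1 ≤ j) else decide (j ≤ i)
    with hg
  have hginj : Function.Injective g := by
    intro a b hab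
    by_contra hne
    by_cases ha : ops a = true <;> by_cases hb : ops b = true
    · have := congrFun hab (min a b + 1)
      simp only [hg, if_pos ha, if_pos hb, decide_eq_decide] at this
      omega
    · have := congrFun hab (min a b - 1)
      simp only [hg, if_pos ha, if_neg hb, decide_eq_decide] at this
      omega
    · have := congrFun hab (min a b - 1)
      simp only [hg, if_neg ha, if_pos hb, decide_eq_decide] at this
      omega
    · have := congrFun hab (max a b)
      simp only [hg, if_neg ha, if_neg hb, decide_eq_decide] at this
      omega
  have hsub : g '' S ⊆ {x : ℤ → Bool | infMap ops x = x} := by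
    rintro _ ⟨i, hi, rfl⟩
    have hi' : ops i ≠ ops (i + 1) := hi
    by_cases hoi : ops i = true
    · have h2 : ops (i + 1) = false := by
        cases hx : ops (i + 1) <;> simp_all
      simp only [Set.mem_setOf_eq, hg]
      simpa [hoi] using fix_up ops i hoi h2
    · have h1 : ops i = false := by simp_all
      have h2 : ops (i + 1) = true := by cases hx : ops (i + 1) <;> simp_all
      simp only [Set.mem_setOf_eq, hg]
      simpa [h1] using fix_down ops i h1 h2
  exact ((h.image (hginj.injOn)).mono hsub)
end

section
/- Let r ≥ 2 be even and let k_1,…,k_r be positive natural numbers with k_1 + ⋯ + k_r ≥ 3 and min(2,k_1) + ⋯ + min(2,k_r) ≥ 3. Then the closed-chain run-length fixed-point counts satisfy 𝔉c([k_1, …, k_r]) = 𝔉c([min(2,k_1), …, min(2,k_r)]). -/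
set_option linter.unusedSectionVars false


/-- The closed-chain AND-OR network map on `ZMod n` determined by
`ops : ZMod n → Bool` (`true` = AND, `false` = OR). -/
def cycleMap {n : ℕ} (ops : ZMod n → Bool) (x : ZMod n → Bool) :
    ZMod n → Bool := fun i =>
  if ops i then x (i - 1) && x (i + 1) else x (i - 1) || x (i + 1)

/-- `Fc ops` is the number of fixed points of the closed-chain AND-OR network. -/
noncomputable def Fc {n : ℕ} (ops : ZMod n → Bool) : ℕ :=
  Nat.card {x : ZMod n → Bool // cycleMap ops x = x}

/-- The cyclic operator assignment for run-length list `L`: going cyclically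
from index `0`, a block of `k_j` consecutive values equal to `true` if `j` is
odd and `false` if `j` is even. -/
def cOps (L : List ℕ) : ZMod L.sum → Bool :=
  fun i => (runOps L).getD i.val false

/-- `Frc L` = 𝔉c(L), the number of fixed points of the closed-chain AND-OR
network with run-length list `L`. -/
noncomputable def Frc (L : List ℕ) : ℕ := Fc (cOps L)

namespace AOC

def blkOf : List ℕ → ℕ → ℕ
  | [], _ => 0
  | k :: t, p => if p < k then 0 else blkOf t (p - k) + 1

def ofs : List ℕ → ℕ → ℕ
  | [], p => p
  | k :: t, p => if p < k then p else ofs t (p - k)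

def stOf : List ℕ → ℕ → ℕ
  | [], _ => 0
  | _ :: _, 0 => 0
  | k :: t, j + 1 => k + stOf t j

theorem length_runOps (L : List ℕ) : (runOps L).length = L.sum := by
  induction L with
  | nil => rfl
  | cons k t ih => simp [runOps, ih]

theorem not_decide_mod (m : ℕ) : (!decide (m % 2 = 0)) = decide ((m + 1) % 2 = 0) := by
  rcases Nat.mod_two_eq_zero_or_one m with h0 | h0 <;> simp [Nat.add_mod, h0]

theorem getD_runOps (L : List ℕ) (p : ℕ) (hp : p < L.sum) :
    (runOps L).getD p false = decide (blkOf L p % 2 = 0) := by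
  induction L generalizing p with
  | nil => simp at hp
  | cons k t ih =>
    by_cases h : p < k
    · have h1 : p < (List.replicate k true).length := by simpa using h
      rw [runOps, List.getD_append _ _ _ _ h1,
        List.getD_eq_getElem _ _ h1, List.getElem_replicate]
      simp [blkOf, h]
    · have hs : p - k < t.sum := by simp [List.sum_cons] at hp; omega
      have h2 : p - k < ((runOps t).map (fun b => !b)).length := by
        simpa [length_runOps] using hs
      rw [runOps, List.getD_append_right _ _ _ _ (by simpa using h)]
      simp only [List.length_replicate]
      rw [List.getD_eq_getElem _ _ h2, List.getElem_map,
        ← List.getD_eq_getElem _ false (by simpa [length_runOps] using hs), ih _ hs]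
      simp only [blkOf, if_neg h]
      exact not_decide_mod _

theorem blkOf_lt (L : List ℕ) (p : ℕ) (hp : p < L.sum) : blkOf L p < L.length := by
  induction L generalizing p with
  | nil => simp at hp
  | cons k t ih =>
    by_cases h : p < k
    · simp [blkOf, h]
    · simp only [blkOf, if_neg h, List.length_cons]
      have : p - k < t.sum := by simp [List.sum_cons] at hp; omega
      exact Nat.succ_lt_succ (ih _ this)

theorem ofs_lt (L : List ℕ) (p : ℕ) (hp : p < L.sum) :
    ofs L p < L.getD (blkOf L p) 0 := by
  induction L generalizing p with
  | nil => simp at hp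
  | cons k t ih =>
    by_cases h : p < k
    · simp [blkOf, ofs, h]
    · have : p - k < t.sum := by simp [List.sum_cons] at hp; omega
      simpa [blkOf, ofs, h] using ih _ this

theorem decomp (L : List ℕ) (p : ℕ) (hp : p < L.sum) :
    stOf L (blkOf L p) + ofs L p = p := by
  induction L generalizing p with
  | nil => simp at hp
  | cons k t ih =>
    by_cases h : p < k
    · simp [blkOf, ofs, stOf, h]
    · have : p - k < t.sum := by simp [List.sum_cons] at hp; omega
      have := ih _ this
      simp only [blkOf, ofs, if_neg h, stOf]
      omega

theorem stOf_spec (L : List ℕ) (j t : ℕ) (hj : j < L.length) (ht : t < L.getD j 0) :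
    stOf L j + t < L.sum ∧ blkOf L (stOf L j + t) = j ∧ ofs L (stOf L j + t) = t := by
  induction L generalizing j with
  | nil => simp at hj
  | cons k tl ih =>
    cases j with
    | zero =>
      have : t < k := by simpa using ht
      simp [stOf, blkOf, ofs, this, List.sum_cons]
      omega
    | succ j =>
      have hj' : j < tl.length := by simpa using hj
      have ht' : t < tl.getD j 0 := by simpa using ht
      obtain ⟨h1, h2, h3⟩ := ih j hj' ht'
      have hk : ¬ (k + stOf tl j + t < k) := by omega
      have hsub : k + stOf tl j + t - k = stOf tl j + t := by omega
      refine ⟨by simp [List.sum_cons, stOf]; omega, ?_, ?_⟩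
      · show blkOf (k :: tl) (k + stOf tl j + t) = j + 1
        rw [show blkOf (k :: tl) (k + stOf tl j + t)
            = if k + stOf tl j + t < k then 0 else blkOf tl (k + stOf tl j + t - k) + 1 from rfl,
          if_neg hk, hsub, h2]
      · show ofs (k :: tl) (k + stOf tl j + t) = t
        rw [show ofs (k :: tl) (k + stOf tl j + t)
            = if k + stOf tl j + t < k then k + stOf tl j + t else ofs tl (k + stOf tl j + t - k) from rfl,
          if_neg hk, hsub, h3]

theorem stOf_zero (L : List ℕ) : stOf L 0 = 0 := by
  cases L <;> rfl

theorem stOf_succ (L : List ℕ) (j : ℕ) : stOf L (j + 1) = stOf L j + L.getD j 0 := by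
  induction L generalizing j with
  | nil => simp [stOf]
  | cons k t ih =>
    cases j with
    | zero => simp [stOf, stOf_zero]
    | succ j => simp [stOf, ih j]; omega

theorem getD_pos (L : List ℕ) (hpos : ∀ k ∈ L, 1 ≤ k) (m : ℕ) (hm : m < L.length) :
    1 ≤ L.getD m 0 := by
  rw [List.getD_eq_getElem _ _ hm]
  exact hpos _ (List.getElem_mem hm)

theorem blkOf_zero (L : List ℕ) (hpos : ∀ k ∈ L, 1 ≤ k) (h : 0 < L.sum) :
    blkOf L 0 = 0 ∧ ofs L 0 = 0 := by
  cases L with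
  | nil => simp at h
  | cons k t =>
    have hk : 0 < k := hpos k (by simp)
    simp [blkOf, ofs, hk]

theorem last_iff (L : List ℕ) (hpos : ∀ k ∈ L, 1 ≤ k) (p : ℕ) (hp : p + 1 = L.sum) :
    blkOf L p = L.length - 1 ∧ ofs L p + 1 = L.getD (blkOf L p) 0 := by
  induction L generalizing p with
  | nil => simp at hp
  | cons k t ih =>
    by_cases h : p < k
    · have htnil : t = [] := by
        cases t with
        | nil => rfl
        | cons a b =>
          have ha : 1 ≤ a := hpos a (by simp)
          have : 1 ≤ (a :: b).sum := by simp [List.sum_cons]; omega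
          simp [List.sum_cons] at hp
          omega
      subst htnil
      simp [List.sum_cons] at hp
      simp [blkOf, ofs, h]
      omega
    · have hts : 1 ≤ t.sum := by simp [List.sum_cons] at hp; omega
      have hne : t ≠ [] := by intro hh; simp [hh] at hts
      have hp' : (p - k) + 1 = t.sum := by simp [List.sum_cons] at hp; omega
      obtain ⟨h1, h2⟩ := ih (fun x hx => hpos x (by simp [hx])) (p - k) hp'
      constructor
      · simp only [blkOf, if_neg h, List.length_cons, h1]
        have : 1 ≤ t.length := List.length_pos_iff.mpr hne
        omega
      · simp only [blkOf, ofs, if_neg h]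
        simpa using h2

theorem succ1 (L : List ℕ) (p : ℕ) (hp : p < L.sum)
    (h : ofs L p + 1 < L.getD (blkOf L p) 0) :
    blkOf L (p + 1) = blkOf L p ∧ ofs L (p + 1) = ofs L p + 1 := by
  have hj := blkOf_lt L p hp
  have := decomp L p hp
  have := stOf_spec L (blkOf L p) (ofs L p + 1) hj (by omega)
  rw [show stOf L (blkOf L p) + (ofs L p + 1) = p + 1 by omega] at this
  exact ⟨this.2.1, this.2.2⟩

theorem stOf_full (L : List ℕ) : stOf L L.length = L.sum := by
  induction L with
  | nil => simp [stOf]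
  | cons k t ih => simp [stOf, List.sum_cons, ih]

theorem succ2 (L : List ℕ) (hpos : ∀ k ∈ L, 1 ≤ k) (p : ℕ) (hp : p + 1 < L.sum)
    (h : ofs L p + 1 = L.getD (blkOf L p) 0) :
    blkOf L (p + 1) = blkOf L p + 1 ∧ ofs L (p + 1) = 0 := by
  have hj := blkOf_lt L p (by omega)
  have hd := decomp L p (by omega)
  have hst : stOf L (blkOf L p + 1) = p + 1 := by rw [stOf_succ]; omega
  have hjlt : blkOf L p + 1 < L.length := by
    by_contra hc
    have hj1 : blkOf L p + 1 = L.length := by omega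
    rw [hj1, stOf_full] at hst
    omega
  have := stOf_spec L (blkOf L p + 1) 0 hjlt (getD_pos L hpos _ hjlt)
  rw [hst] at this
  simpa using ⟨this.2.1, this.2.2⟩

theorem pred1 (L : List ℕ) (p : ℕ) (hp : p < L.sum) (h : ofs L p ≠ 0) :
    blkOf L (p - 1) = blkOf L p ∧ ofs L (p - 1) = ofs L p - 1 := by
  have hj := blkOf_lt L p hp
  have hd := decomp L p hp
  have ho := ofs_lt L p hp
  have := stOf_spec L (blkOf L p) (ofs L p - 1) hj (by omega)
  rw [show stOf L (blkOf L p) + (ofs L p - 1) = p - 1 by omega] at this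
  exact ⟨this.2.1, this.2.2⟩

theorem pred2 (L : List ℕ) (hpos : ∀ k ∈ L, 1 ≤ k) (p : ℕ) (hp : p < L.sum)
    (h : ofs L p = 0) (h1 : 1 ≤ p) :
    1 ≤ blkOf L p ∧ blkOf L (p - 1) = blkOf L p - 1 ∧
      ofs L (p - 1) + 1 = L.getD (blkOf L p - 1) 0 := by
  have hj := blkOf_lt L p hp
  have hd := decomp L p hp
  have hjpos : 1 ≤ blkOf L p := by
    by_contra hc
    have h0 : blkOf L p = 0 := by omega
    rw [h0, stOf_zero] at hd
    omega
  have hs : stOf L (blkOf L p) = stOf L (blkOf L p - 1) + L.getD (blkOf L p - 1) 0 := by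
    conv_lhs => rw [show blkOf L p = (blkOf L p - 1) + 1 by omega]
    exact stOf_succ L _
  have hkpos : 1 ≤ L.getD (blkOf L p - 1) 0 := getD_pos L hpos _ (by omega)
  have := stOf_spec L (blkOf L p - 1) (L.getD (blkOf L p - 1) 0 - 1) (by omega) (by omega)
  rw [show stOf L (blkOf L p - 1) + (L.getD (blkOf L p - 1) 0 - 1) = p - 1 by omega] at this
  exact ⟨hjpos, this.2.1, by omega⟩


end AOC

namespace AOC2
open AOC

def Bz (L : List ℕ) (i : ZMod L.sum) : ZMod L.length := (blkOf L i.val : ZMod L.length)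

def stz (L : List ℕ) (j : ZMod L.length) : ZMod L.sum := (stOf L j.val : ZMod L.sum)

section
variable (L : List ℕ) (hpos : ∀ k ∈ L, 1 ≤ k) (hsum : 3 ≤ L.sum) (hlen : 2 ≤ L.length)

theorem len_pos (h3 : 3 ≤ L.sum) (hpos : ∀ k ∈ L, 1 ≤ k) : 1 ≤ L.length := by
  cases L with
  | nil => simp at h3
  | cons a t => simp

include hsum in
theorem val_Bz (i : ZMod L.sum) : (Bz L i).val = blkOf L i.val := by
  haveI : NeZero L.sum := ⟨by omega⟩
  exact ZMod.val_cast_of_lt (blkOf_lt _ _ (ZMod.val_lt i))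

include hsum in
theorem val_lt_sum (i : ZMod L.sum) : i.val < L.sum := by
  haveI : NeZero L.sum := ⟨by omega⟩
  exact ZMod.val_lt i

include hsum in
theorem cast_val_eq (i : ZMod L.sum) : ((i.val : ℕ) : ZMod L.sum) = i := by
  haveI : NeZero L.sum := ⟨by omega⟩
  exact ZMod.natCast_rightInverse i

include hsum hpos in
theorem Bz_succ (i : ZMod L.sum) :
    Bz L (i + 1) = if ofs L i.val + 1 = L.getD (blkOf L i.val) 0 then Bz L i + 1 else Bz L i := by
  haveI : NeZero L.sum := ⟨by omega⟩
  have hL1 : 1 ≤ L.length := len_pos L hsum hpos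
  have hvlt := val_lt_sum L hsum i
  by_cases hw : i.val + 1 = L.sum
  · have hlast := last_iff L hpos i.val hw
    rw [if_pos hlast.2]
    have hi1 : i + 1 = 0 := by
      have : i + 1 = ((i.val + 1 : ℕ) : ZMod L.sum) := by
        push_cast [cast_val_eq L hsum]
        rfl
      rw [this, hw, ZMod.natCast_self]
    rw [hi1]
    have hB0 : Bz L 0 = 0 := by
      unfold Bz
      rw [ZMod.val_zero, (blkOf_zero L hpos (by omega)).1, Nat.cast_zero]
    rw [hB0]
    unfold Bz
    rw [hlast.1]
    have : ((L.length - 1 : ℕ) : ZMod L.length) + 1 = 0 := by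
      have : ((L.length - 1 : ℕ) : ZMod L.length) + 1 = ((L.length - 1 + 1 : ℕ) : ZMod L.length) := by
        push_cast
        ring
      rw [this, show L.length - 1 + 1 = L.length by omega, ZMod.natCast_self]
    rw [this]
  · have hv1 : (i + 1).val = i.val + 1 := by
      haveI : Fact (1 < L.sum) := ⟨by omega⟩
      rw [ZMod.val_add_of_lt]
      · rw [ZMod.val_one]
      · rw [ZMod.val_one]; omega
    by_cases hc : ofs L i.val + 1 = L.getD (blkOf L i.val) 0
    · rw [if_pos hc]
      have := succ2 L hpos i.val (by omega) hc
      unfold Bz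
      rw [hv1, this.1]
      push_cast
      ring
    · rw [if_neg hc]
      have ho := ofs_lt L i.val hvlt
      have := succ1 L i.val hvlt (by omega)
      unfold Bz
      rw [hv1, this.1]

include hsum hpos in
theorem Bz_pred (i : ZMod L.sum) :
    Bz L (i - 1) = if ofs L i.val = 0 then Bz L i - 1 else Bz L i := by
  haveI : NeZero L.sum := ⟨by omega⟩
  have hL1 : 1 ≤ L.length := len_pos L hsum hpos
  have hvlt := val_lt_sum L hsum i
  by_cases hw : i.val = 0
  · have hi0 : i = 0 := by
      have := cast_val_eq L hsum i
      rw [hw] at this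
      simpa using this.symm
    have h0 := blkOf_zero L hpos (by omega)
    rw [if_pos (by rw [hw, h0.2])]
    have him : i - 1 = ((L.sum - 1 : ℕ) : ZMod L.sum) := by
      rw [sub_eq_iff_eq_add, hi0]
      have : ((L.sum - 1 : ℕ) : ZMod L.sum) + 1 = ((L.sum - 1 + 1 : ℕ) : ZMod L.sum) := by
        push_cast; ring
      rw [this, show L.sum - 1 + 1 = L.sum by omega, ZMod.natCast_self]
    have hlast := last_iff L hpos (L.sum - 1) (by omega)
    unfold Bz
    rw [him, ZMod.val_cast_of_lt (by omega), hlast.1, hi0, ZMod.val_zero, h0.1]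
    rw [Nat.cast_zero, zero_sub]
    exact eq_neg_of_add_eq_zero_left (by
      have : ((L.length - 1 : ℕ) : ZMod L.length) + 1 = ((L.length - 1 + 1 : ℕ) : ZMod L.length) := by
        push_cast; ring
      rw [this, show L.length - 1 + 1 = L.length by omega, ZMod.natCast_self])
  · have him : i - 1 = ((i.val - 1 : ℕ) : ZMod L.sum) := by
      rw [sub_eq_iff_eq_add]
      have : ((i.val - 1 : ℕ) : ZMod L.sum) + 1 = ((i.val - 1 + 1 : ℕ) : ZMod L.sum) := by
        push_cast; ring
      rw [this, show i.val - 1 + 1 = i.val by omega, cast_val_eq L hsum]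
    by_cases hc : ofs L i.val = 0
    · rw [if_pos hc]
      have := pred2 L hpos i.val hvlt hc (by omega)
      unfold Bz
      rw [him, ZMod.val_cast_of_lt (by omega), this.2.1]
      rw [eq_sub_iff_add_eq]
      have h2 : ((blkOf L i.val - 1 : ℕ) : ZMod L.length) + 1
          = ((blkOf L i.val - 1 + 1 : ℕ) : ZMod L.length) := by push_cast; ring
      rw [h2, show blkOf L i.val - 1 + 1 = blkOf L i.val by omega]
    · rw [if_neg hc]
      have := pred1 L i.val hvlt hc
      unfold Bz
      rw [him, ZMod.val_cast_of_lt (by omega), this.1]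

include hlen in
theorem bflip (heven : Even L.length) (j : ZMod L.length) :
    decide ((j + 1).val % 2 = 0) = !decide (j.val % 2 = 0) := by
  haveI : NeZero L.length := ⟨by omega⟩
  haveI : Fact (1 < L.length) := ⟨by omega⟩
  have hvlt : j.val < L.length := ZMod.val_lt j
  by_cases hw : j.val + 1 = L.length
  · have hj1 : j + 1 = 0 := by
      have : j + 1 = ((j.val + 1 : ℕ) : ZMod L.length) := by
        have := ZMod.natCast_rightInverse (n := L.length) j
        push_cast [this]
        rfl
      rw [this, hw, ZMod.natCast_self]
    obtain ⟨m, hm⟩ := heven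
    have h1 : j.val % 2 = 1 := by omega
    rw [hj1, ZMod.val_zero]
    simp [h1]
  · have hv1 : (j + 1).val = j.val + 1 := by
      rw [ZMod.val_add_of_lt]
      · rw [ZMod.val_one]
      · rw [ZMod.val_one]; omega
    rw [hv1, ← not_decide_mod]

include hsum hpos in
theorem stz_spec (j : ZMod L.length) :
    Bz L (stz L j) = j ∧ ofs L (stz L j).val = 0 := by
  haveI : NeZero L.sum := ⟨by omega⟩
  haveI : NeZero L.length := ⟨by have := len_pos L hsum hpos; omega⟩
  have hj : j.val < L.length := ZMod.val_lt j
  have := stOf_spec L j.val 0 hj (getD_pos L hpos _ hj)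
  rw [Nat.add_zero] at this
  have hv : (stz L j).val = stOf L j.val := ZMod.val_cast_of_lt this.1
  constructor
  · unfold Bz
    rw [hv, this.2.1]
    exact ZMod.natCast_rightInverse j
  · rw [hv, this.2.2]

end
end AOC2

namespace AOC3
open AOC AOC2

def Qp (r : ℕ) (K : ℕ → ℕ) (y : ZMod r → Bool) : Prop :=
  ∀ j : ZMod r, (y j ≠ y (j + 1) → y j = !decide (j.val % 2 = 0)) ∧
    (K j.val = 1 → y (j - 1) = y j ∨ y j = y (j + 1))

theorem ptChar : ∀ o a b c : Bool,
    (((if o then a && c else a || c) = b) ↔ ((a = c → b = a) ∧ (a ≠ c → o = !b))) := by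
  decide

theorem fixed_iff {n : ℕ} (ops x : ZMod n → Bool) :
    cycleMap ops x = x ↔ ∀ i, (x (i - 1) = x (i + 1) → x i = x (i - 1)) ∧
      (x (i - 1) ≠ x (i + 1) → ops i = !(x i)) := by
  rw [funext_iff]
  exact forall_congr' fun i => ptChar (ops i) (x (i - 1)) (x i) (x (i + 1))

theorem boolCase1 : ∀ u v w d o : Bool, (v ≠ w → v = !d) → (u ≠ v → u = d) →
    (u = v ∨ v = w) → o = d → ((u = w → v = u) ∧ (u ≠ w → o = !v)) := by decide

theorem boolCase2 : ∀ v w d o : Bool, (v ≠ w → v = !d) → o = d →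
    ((v = w → v = v) ∧ (v ≠ w → o = !v)) := by decide

theorem boolCase3 : ∀ u v d o : Bool, (u ≠ v → u = d) → o = d →
    ((u = v → v = u) ∧ (u ≠ v → o = !v)) := by decide

theorem boolCase4 : ∀ u v w : Bool, u ≠ v → v ≠ w → (u = w → v = u) → False := by decide

theorem boolCase5 : ∀ a b c d : Bool, (a = b → c = a) → c ≠ d → a = !c → b ≠ d →
    c ≠ b → a ≠ b := by decide

section
variable (L : List ℕ) (hpos : ∀ k ∈ L, 1 ≤ k) (hsum : 3 ≤ L.sum) (hlen : 2 ≤ L.length)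
  (heven : Even L.length)

include hsum in
theorem hops : ∀ i : ZMod L.sum, cOps L i = decide ((Bz L i).val % 2 = 0) := by
  intro i
  rw [val_Bz L hsum]
  exact getD_runOps L i.val (val_lt_sum L hsum i)

include hpos hsum in
theorem val_sub_one (i : ZMod L.sum) (h : i.val ≠ 0) : (i - 1).val = i.val - 1 := by
  haveI : NeZero L.sum := ⟨by omega⟩
  have hvlt : i.val < L.sum := ZMod.val_lt i
  have him : i - 1 = ((i.val - 1 : ℕ) : ZMod L.sum) := by
    rw [sub_eq_iff_eq_add]
    have h2 : ((i.val - 1 : ℕ) : ZMod L.sum) + 1 = ((i.val - 1 + 1 : ℕ) : ZMod L.sum) := by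
      push_cast; ring
    rw [h2, show i.val - 1 + 1 = i.val by omega, cast_val_eq L hsum]
  rw [him, ZMod.val_cast_of_lt (by omega)]

include hpos hsum hlen heven in
theorem forward (y : ZMod L.length → Bool) (hQ : Qp L.length (fun m => L.getD m 0) y) :
    cycleMap (cOps L) (fun i => y (Bz L i)) = (fun i => y (Bz L i)) := by
  rw [fixed_iff]
  intro i
  have hB1 := Bz_succ L hpos hsum i
  have hB2 := Bz_pred L hpos hsum i
  have hflip := bflip L hlen heven
  have hod : cOps L i = decide ((Bz L i).val % 2 = 0) := hops L hsum i
  have hsub : (Bz L i - 1) + 1 = Bz L i := sub_add_cancel _ _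
  have hq1 := (hQ (Bz L i)).1
  have hq1' := (hQ (Bz L i - 1)).1
  rw [hsub] at hq1'
  have hd' : decide ((Bz L i).val % 2 = 0) = !decide ((Bz L i - 1).val % 2 = 0) := by
    have := hflip (Bz L i - 1)
    rw [hsub] at this
    exact this
  have h2 : y (Bz L i - 1) ≠ y (Bz L i) → y (Bz L i - 1) = decide ((Bz L i).val % 2 = 0) := by
    intro hne
    rw [hq1' hne, hd']
  by_cases hl : ofs L i.val + 1 = L.getD (blkOf L i.val) 0 <;>
    by_cases hf : ofs L i.val = 0
  · -- first and last: block of length 1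
    rw [if_pos hl] at hB1
    rw [if_pos hf] at hB2
    rw [hB1, hB2]
    have hq2 := (hQ (Bz L i)).2
    rw [val_Bz L hsum] at hq2
    have hy := hq2 (by show L.getD (blkOf L i.val) 0 = 1; omega)
    exact boolCase1 _ _ _ _ _ hq1 h2 hy hod
  · -- last, not first
    rw [if_pos hl] at hB1
    rw [if_neg hf] at hB2
    rw [hB1, hB2]
    exact boolCase2 _ _ _ _ hq1 hod
  · -- first, not last
    rw [if_neg hl] at hB1
    rw [if_pos hf] at hB2
    rw [hB1, hB2]
    exact boolCase3 _ _ _ _ h2 hod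
  · -- interior
    rw [if_neg hl] at hB1
    rw [if_neg hf] at hB2
    rw [hB1, hB2]
    exact ⟨fun _ => rfl, fun h => absurd rfl h⟩

include hpos hsum in
theorem hcst (x : ZMod L.sum → Bool) (hx : cycleMap (cOps L) x = x) :
    ∀ i : ZMod L.sum, cOps L i = cOps L (i + 1) → x i = x (i + 1) := by
  intro i heq
  by_contra hne
  have chi := (fixed_iff (cOps L) x).mp hx
  have h1 : cOps L i = !(x i) := by
    apply (chi i).2
    intro hc
    exact hne (by rw [(chi i).1 hc, hc])
  have hi1 : (i + 1) - 1 = i := by ring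
  have hchi2 := chi (i + 1)
  rw [hi1] at hchi2
  have h2 : cOps L (i + 1) = !(x (i + 1)) := by
    apply hchi2.2
    intro hc
    exact hne ((hchi2.1 hc).symm)
  rw [h1, h2] at heq
  exact hne (by
    cases hx1 : x i <;> cases hx2 : x (i + 1) <;> simp [hx1, hx2] at heq ⊢)

include hpos hsum in
theorem blockConst (x : ZMod L.sum → Bool) (hx : cycleMap (cOps L) x = x) :
    ∀ i, x i = x (stz L (Bz L i)) := by
  suffices h : ∀ t, ∀ i : ZMod L.sum, ofs L i.val = t → x i = x (stz L (Bz L i)) from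
    fun i => h (ofs L i.val) i rfl
  intro t
  induction t with
  | zero =>
    intro i h0
    have hvlt := val_lt_sum L hsum i
    have hd := decomp L i.val hvlt
    rw [h0, Nat.add_zero] at hd
    have hst : stz L (Bz L i) = i := by
      unfold stz
      rw [val_Bz L hsum, hd, cast_val_eq L hsum]
    rw [hst]
  | succ t ih =>
    intro i hofs
    have hvlt := val_lt_sum L hsum i
    have hne0 : i.val ≠ 0 := by
      intro h0
      have := (blkOf_zero L hpos (by omega)).2
      rw [h0, this] at hofs
      omega
    have hv : (i - 1).val = i.val - 1 := val_sub_one L hpos hsum i hne0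
    have hp1 := pred1 L i.val hvlt (by omega)
    have hBpred : Bz L (i - 1) = Bz L i := by unfold Bz; rw [hv, hp1.1]
    have hops_eq : cOps L (i - 1) = cOps L ((i - 1) + 1) := by
      rw [sub_add_cancel, hops L hsum (i - 1), hops L hsum i, hBpred]
    have hstep : x (i - 1) = x i := by
      have := hcst L hpos hsum x hx (i - 1) hops_eq
      rw [sub_add_cancel] at this
      exact this
    have hih := ih (i - 1) (by rw [hv, hp1.2, hofs]; omega)

    rw [← hstep, hih, hBpred]

include hpos hsum hlen in
theorem backward (x : ZMod L.sum → Bool) (hx : cycleMap (cOps L) x = x) :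
    Qp L.length (fun m => L.getD m 0) (fun j => x (stz L j)) := by
  have chi := (fixed_iff (cOps L) x).mp hx
  have hconst := blockConst L hpos hsum x hx
  intro j
  dsimp only
  constructor
  · intro hne
    have he1 : (stz L (j + 1) - 1) + 1 = stz L (j + 1) := sub_add_cancel _ _
    have hsp := stz_spec L hpos hsum (j + 1)
    have hBe : Bz L (stz L (j + 1) - 1) = j := by
      have h := Bz_pred L hpos hsum (stz L (j + 1))
      rw [if_pos hsp.2, hsp.1] at h
      rw [h]
      ring
    have hxe : x (stz L (j + 1) - 1) = x (stz L j) := by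
      rw [hconst (stz L (j + 1) - 1), hBe]
    have hne' : x (stz L (j + 1) - 1) ≠ x ((stz L (j + 1) - 1) + 1) := by
      rw [hxe, he1]
      exact hne
    have hc := chi (stz L (j + 1) - 1)
    rw [he1] at hc
    have hne'' : x (stz L (j + 1) - 1 - 1) ≠ x (stz L (j + 1)) := by
      intro heq
      rw [he1] at hne'
      exact hne' ((hc.1 heq).trans heq)
    have hop := hc.2 hne''
    have hfin : decide (j.val % 2 = 0) = !(x (stz L j)) := by
      rw [← hxe, ← hop, hops L hsum (stz L (j + 1) - 1), hBe]
    rw [hfin, Bool.not_not]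
  · intro h1
    have hsp := stz_spec L hpos hsum j
    have hval : (Bz L (stz L j)).val = blkOf L (stz L j).val := val_Bz L hsum _
    have hblk : blkOf L (stz L j).val = j.val := by rw [← hval, hsp.1]
    have hB1 := Bz_succ L hpos hsum (stz L j)
    rw [if_pos (by rw [hsp.2, hblk, h1]), hsp.1] at hB1
    have hB2 := Bz_pred L hpos hsum (stz L j)
    rw [if_pos hsp.2, hsp.1] at hB2
    by_contra hcon
    push_neg at hcon
    obtain ⟨hc1, hc2⟩ := hcon
    have e1 : x (stz L j - 1) = x (stz L (j - 1)) := by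
      rw [hconst (stz L j - 1), hB2]
    have e2 : x (stz L j + 1) = x (stz L (j + 1)) := by
      rw [hconst (stz L j + 1), hB1]
    have hchi := (chi (stz L j)).1
    rw [e1, e2] at hchi
    exact boolCase4 _ _ _ hc1 hc2 hchi

include hpos hsum hlen heven in
theorem card_eq (r : ℕ) (hrL : L.length = r) :
    Frc L = Nat.card {y : ZMod r → Bool // Qp r (fun m => L.getD m 0) y} := by
  subst hrL
  unfold Frc Fc
  apply Nat.card_congr
  exact
    { toFun := fun x => ⟨fun j => x.1 (stz L j), backward L hpos hsum hlen x.1 x.2⟩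
      invFun := fun y => ⟨fun i => y.1 (Bz L i), forward L hpos hsum hlen heven y.1 y.2⟩
      left_inv := fun x => Subtype.ext (funext fun i =>
        (blockConst L hpos hsum x.1 x.2 i).symm)
      right_inv := fun y => Subtype.ext (funext fun j => by
        dsimp only
        rw [(stz_spec L hpos hsum j).1]) }

end
end AOC3


/-- reduction for closed chains: each run length may be
replaced by its minimum with `2` without changing the number of fixed
points. -/
theorem andor_closed_chain_reduction (L : List ℕ)
    (hlen : 2 ≤ L.length) (heven : Even L.length)
    (hpos : ∀ k ∈ L, 1 ≤ k) (hsum : 3 ≤ L.sum)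
    (hsum' : 3 ≤ (L.map (fun k => min 2 k)).sum) :
    Frc L = Frc (L.map (fun k => min 2 k)) := by
  have hL' : (L.map (fun k => min 2 k)).length = L.length := by simp
  have hpos' : ∀ k ∈ L.map (fun k => min 2 k), 1 ≤ k := by
    intro k hk
    simp only [List.mem_map] at hk
    obtain ⟨a, ha, rfl⟩ := hk
    have := hpos a ha
    omega
  rw [AOC3.card_eq L hpos hsum hlen heven L.length rfl,
    AOC3.card_eq (L.map (fun k => min 2 k)) hpos' hsum' (by omega) (by rwa [hL'])
      L.length hL']
  apply Nat.card_congr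
  apply Equiv.subtypeEquivRight
  intro y
  haveI : NeZero L.length := ⟨by omega⟩
  have hKK : ∀ j : ZMod L.length,
      (L.getD j.val 0 = 1 ↔ (L.map (fun k => min 2 k)).getD j.val 0 = 1) := by
    intro j
    have hj : j.val < L.length := ZMod.val_lt j
    rw [List.getD_eq_getElem (L.map (fun k => min 2 k)) 0
        (show j.val < (L.map (fun k => min 2 k)).length by rwa [hL']),
      List.getD_eq_getElem L 0 hj, List.getElem_map]
    have := hpos (L[j.val]) (List.getElem_mem hj)
    omega
  exact forall_congr' fun j => and_congr Iff.rfl (imp_congr (hKK j) Iff.rfl)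
end
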